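/- arXiv:2508.12757 — 9 statements merged into one kernel-verified Lean document; each statement's English description precedes it below -/
import Mathlib

section
/- Every nonzero alternating three-form on a four-dimensional complex vector space is decomposable: if ω is a three-form on V = Fin 4 → ℂ with ω ≠ 0, then there exist linear functionals f₁, f₂, f₃ : V →ₗ[ℂ] ℂ such that for all u, v, w ∈ V, ω(u,v,w) equals the determinant of the 3×3 matrix with rows (f₁u, f₁v, f₁w), (f₂u, f₂v, f₂w), (f₃u, f₃v, f₃w); that is, ω = f₁ ∧ f₂ ∧ f₃. In particular every nonzero three-form in four variables has rank three. -/
/-!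
In dimension `m`, every `(m - 1)`-form `ω` is the contraction `det (x, ·)` of a determinant with a
vector `x`: both sides are determined by their values on the `m` increasing `(m - 1)`-tuples of
basis vectors, and Laplace expansion along `x` shows which `x` matches them. If `ω ≠ 0` then
`x ≠ 0`, so `x` is the first vector of some basis `b`. Then `det = c • b.det`, and expanding
`b.det (x, v₁, …)` along its first column gives `ω = c • b₁* ∧ ⋯ ∧ bₘ₋₁*`.
-/

open Matrix Module

theorem Fin.exists_succAbove_eq_of_strictMono {n : ℕ} {s : Fin n → Fin (n + 1)}
    (hs : StrictMono s) : ∃ p : Fin (n + 1), p.succAbove = s := by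
  obtain ⟨p, hp⟩ : ∃ p, p ∉ Set.range s := by
    by_contra! h
    simpa using Fintype.card_le_of_surjective s h
  refine ⟨p, ?_⟩
  rw [Finset.orderEmbOfFin_unique (s := {p}ᶜ) (by simp [Finset.card_compl])
    (fun x => by simpa [eq_comm] using fun h => hp ⟨x, h⟩) hs,
    Finset.orderEmbOfFin_compl_singleton_eq_succAboveOrderEmb]
  rfl

namespace AlternatingMap

variable {R M N : Type*} [CommSemiring R] [AddCommMonoid M] [Module R M] [AddCommGroup N]
  [Module R N] {n : ℕ}

theorem ext_basis_succAbove (e : Basis (Fin (n + 1)) R M) {f g : M [⋀^Fin n]→ₗ[R] N}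
    (h : ∀ p : Fin (n + 1), f (e ∘ p.succAbove) = g (e ∘ p.succAbove)) : f = g := by
  refine e.ext_alternating fun v hv => ?_
  obtain ⟨p, hp⟩ := Fin.exists_succAbove_eq_of_strictMono
    ((Tuple.monotone_sort v).strictMono_of_injective (hv.comp (Tuple.sort v).injective))
  have := h p
  rw [hp, ← Function.comp_assoc, f.map_perm, g.map_perm] at this
  exact smul_left_cancel _ this

end AlternatingMap

namespace Module.Basis

variable {R M : Type*} [CommRing R] [AddCommGroup M] [Module R M] {n : ℕ}

theorem curryLeft_det_succAbove (e : Basis (Fin (n + 1)) R M) (x : M) (p : Fin (n + 1)) :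
    e.det.curryLeft x (e ∘ p.succAbove) = (-1) ^ (p : ℕ) * e.coord p x := by
  rw [AlternatingMap.curryLeft_apply_apply, e.det_apply, det_succ_column_zero,
    Finset.sum_eq_single p]
  · have : (e.toMatrix (vecCons x (e ∘ p.succAbove))).submatrix p.succAbove Fin.succ = 1 := by
      ext k l
      simp [toMatrix_apply, one_apply, Finsupp.single_apply, eq_comm]
    simp [this, toMatrix_apply]
  · intro i _ hi
    obtain ⟨k, hk⟩ := Fin.exists_succAbove_eq (Ne.symm hi)
    refine mul_eq_zero_of_right _ (det_eq_zero_of_row_eq_zero k fun l => ?_)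
    simp [toMatrix_apply, hk]
  · simp

theorem curryLeft_det_self_zero (b : Basis (Fin (n + 1)) R M) (v : Fin n → M) :
    b.det.curryLeft (b 0) v = (Matrix.of fun i j => b.coord i.succ (v j)).det := by
  rw [AlternatingMap.curryLeft_apply_apply, b.det_apply, det_succ_column_zero, Fin.sum_univ_succ,
    Finset.sum_eq_zero]
  · simp [toMatrix_apply, submatrix, coord_apply]
  · intro i _
    simp [toMatrix_apply]

theorem exists_eq_curryLeft_det (e : Basis (Fin (n + 1)) R M) (ω : M [⋀^Fin n]→ₗ[R] R) :
    ∃ x, ω = e.det.curryLeft x := by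
  refine ⟨∑ p : Fin (n + 1), ((-1) ^ (p : ℕ) * ω (e ∘ p.succAbove)) • e p,
    AlternatingMap.ext_basis_succAbove e fun q => ?_⟩
  rw [curryLeft_det_succAbove, coord_apply, repr_sum_self,
    ← mul_assoc, ← pow_add, ← two_mul, pow_mul]
  simp

end Module.Basis

theorem exists_linearIndependent_cons_of_ne_zero {K V : Type*} [DivisionRing K] [AddCommGroup V]
    [Module K V] {x : V} (hx : x ≠ 0) {k : ℕ} (hk : k < finrank K V) :
    ∃ v : Fin k → V, LinearIndependent K (Fin.cons x v : Fin (k + 1) → V) := by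
  induction k with
  | zero => exact ⟨Fin.elim0, by simpa [linearIndependent_unique_iff] using hx⟩
  | succ k ih =>
    obtain ⟨v, hv⟩ := ih (by omega)
    obtain ⟨y, hy⟩ := exists_linearIndependent_snoc_of_lt_finrank hv hk
    exact ⟨Fin.snoc v y, by rwa [Fin.cons_snoc_eq_snoc_cons]⟩

theorem Module.exists_finBasis_zero_eq {K V : Type*} [DivisionRing K] [AddCommGroup V]
    [Module K V] {n : ℕ} (hV : finrank K V = n + 1) {x : V} (hx : x ≠ 0) :
    ∃ b : Basis (Fin (n + 1)) K V, b 0 = x := by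
  have := Module.finite_of_finrank_eq_succ hV
  obtain ⟨v, hv⟩ := exists_linearIndependent_cons_of_ne_zero (K := K) hx (k := n) (by omega)
  exact ⟨basisOfLinearIndependentOfCardEqFinrank hv (by simp [hV]), by simp⟩

namespace AlternatingMap

variable {K V : Type*} [Field K] [AddCommGroup V] [Module K V]

def IsDecomposable {k : ℕ} (ω : V [⋀^Fin k]→ₗ[K] K) : Prop :=
  ∃ f : Fin k → Dual K V, ∀ v, ω v = (Matrix.of fun i j => f i (v j)).det

theorem isDecomposable_of_finrank_eq_add_two {n : ℕ} (hV : finrank K V = n + 2)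
    {ω : V [⋀^Fin (n + 1)]→ₗ[K] K} (hω : ω ≠ 0) : ω.IsDecomposable := by
  have := Module.finite_of_finrank_eq_succ hV
  set e := finBasisOfFinrankEq K V hV
  obtain ⟨x, rfl⟩ := e.exists_eq_curryLeft_det ω
  obtain ⟨b, rfl⟩ := exists_finBasis_zero_eq hV (x := x) fun hx => hω (by simp [hx])
  set g : Fin (n + 1) → Dual K V := fun i => b.coord i.succ
  refine ⟨Function.update g 0 (e.det b • g 0), fun v => ?_⟩
  set A : Matrix (Fin (n + 1)) (Fin (n + 1)) K := of fun i j => g i (v j)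
  have hrow : (of fun i j => Function.update g 0 (e.det b • g 0) i (v j)) =
      updateRow A 0 (e.det b • A 0) := by
    ext i j
    by_cases hi : i = 0 <;> simp [A, hi, updateRow_apply]
  conv_lhs => rw [e.det.eq_smul_basis_det b]
  rw [hrow, det_updateRow_smul, updateRow_eq_self, curryLeft_apply_apply, smul_apply,
    ← curryLeft_apply_apply, b.curryLeft_det_self_zero, smul_eq_mul]

end AlternatingMap

/-- Every nonzero alternating three-form on a four-dimensional complex vector space is
decomposable: it is the wedge product of three linear functionals. -/
theorem threeForm_fourVars_decomposable
    (ω : AlternatingMap ℂ (Fin 4 → ℂ) ℂ (Fin 3)) (hω : ω ≠ 0) :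
    ∃ f₁ f₂ f₃ : (Fin 4 → ℂ) →ₗ[ℂ] ℂ, ∀ u v w : Fin 4 → ℂ,
      ω ![u, v, w] =
        Matrix.det !![f₁ u, f₁ v, f₁ w; f₂ u, f₂ v, f₂ w; f₃ u, f₃ v, f₃ w] := by
  obtain ⟨f, hf⟩ := AlternatingMap.isDecomposable_of_finrank_eq_add_two (by simp) hω
  refine ⟨f 0, f 1, f 2, fun u v w => ?_⟩
  rw [hf, det_fin_three, det_fin_three]
  rfl
end

section
/- Normal form of rank-five three-forms in five variables: let ω be a three-form on V = Fin 5 → ℂ of maximal rank, i.e. the only v ∈ V with ω(v,u,w) = 0 for all u,w ∈ V is v = 0. Then ω is GL₅-equivalent to e^{123} + e^{145}: there exists a linear automorphism g : V ≃ₗ[ℂ] V such that ω(g u, g v, g w) = (e^{123} + e^{145})(u,v,w) for all u, v, w ∈ V. -/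
/-!
Some contraction `ι_v ω` of a three-form of maximal rank on a space of dimension at least four
has rank four. Otherwise every Pfaffian of every `ι_v ω` vanishes; polarizing in `v` shows that
`ι_u ω` vanishes on the `ι_e ω`-orthogonal complement `K` of a hyperbolic pair `x₂, x₃` of some
`ι_e ω`, and then a nonzero vector of `K` killed by `ω(x₂, x₃, ·)`, which exists by counting
dimensions, lies in the radical of `ω`.

In dimension five, a Darboux frame `y₁, …, y₄` of `ι_v ω` gives
`ω = v* ∧ (y₁* ∧ y₂* + y₃* ∧ y₄*) + ψ` with `ψ` a three-form in the `yᵢ*`. Replacing `yᵢ` by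
`yᵢ - cᵢ v` leaves `ι_v ω` alone and shifts each of the four coefficients of `ψ` by exactly one
`cᵢ`, so `ψ` can be removed.
-/

noncomputable section

/-- `eDet i j k u v w` is the three-form `e^{ijk}` evaluated at `(u, v, w)`:
the determinant of the 3×3 matrix with rows `(uᵢ, vᵢ, wᵢ)`, `(uⱼ, vⱼ, wⱼ)`, `(uₖ, vₖ, wₖ)`. -/
def eDet {n : ℕ} (i j k : Fin n) (u v w : Fin n → ℂ) : ℂ :=
  Matrix.det !![u i, v i, w i; u j, v j, w j; u k, v k, w k]

theorem Module.Basis.ext_alternating_of_strictMono {R N₁ N₂ ι : Type*} [CommRing R]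
    [AddCommGroup N₁] [AddCommGroup N₂] [Module R N₁] [Module R N₂] [LinearOrder ι] {k : ℕ}
    {f g : N₁ [⋀^Fin k]→ₗ[R] N₂} (e : Module.Basis ι R N₁)
    (h : ∀ v : Fin k → ι, StrictMono v → f (e ∘ v) = g (e ∘ v)) : f = g := by
  refine e.ext_alternating fun v hv => ?_
  have hsort : StrictMono (v ∘ Tuple.sort v) :=
    (Tuple.monotone_sort v).strictMono_of_injective (hv.comp (Tuple.sort v).injective)
  have hv' : (fun i => e (v i)) = (e ∘ v ∘ Tuple.sort v) ∘ ⇑(Tuple.sort v)⁻¹ := by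
    ext i; simp
  rw [hv', f.map_perm, g.map_perm, h _ hsort]

namespace AlternatingMap

section CommRing

variable {R M : Type*} [CommRing R] [AddCommGroup M] [Module R M] (ω : M [⋀^Fin 3]→ₗ[R] R)

def contract : M →ₗ[R] LinearMap.BilinForm R M where
  toFun v := LinearMap.mk₂ R (fun a b => ω ![v, a, b])
    (fun _ _ _ => (ω.curryLeft v).map_vecCons_add _ _ _)
    (fun _ _ _ => (ω.curryLeft v).map_vecCons_smul _ _ _)
    (fun a _ _ => ((ω.curryLeft v).curryLeft a).map_vecCons_add _ _ _)
    (fun _ a _ => ((ω.curryLeft v).curryLeft a).map_vecCons_smul _ _ _)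
  map_add' _ _ := by ext; exact ω.map_vecCons_add _ _ _
  map_smul' _ _ := by ext; exact ω.map_vecCons_smul _ _ _

theorem contract_apply (v a b : M) : ω.contract v a b = ω ![v, a, b] := rfl

theorem contract_apply_self (v b : M) : ω.contract v v b = 0 :=
  ω.map_eq_zero_of_eq ![v, v, b] (i := 0) (j := 1) rfl (by decide)

theorem contract_isAlt (v : M) : (ω.contract v).IsAlt :=
  fun a => ω.map_eq_zero_of_eq ![v, a, a] (i := 1) (j := 2) rfl (by decide)

theorem contract_swap (a v b : M) : ω.contract a v b = -ω.contract v a b := by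
  have hAlt : (ω.contract.compr₂ (LinearMap.applyₗ b)).IsAlt := fun x => ω.contract_apply_self x b
  exact (hAlt.neg v a).symm

theorem contract_rotate (a b v : M) : ω.contract a b v = ω.contract v a b := by
  rw [← (ω.contract_isAlt a).neg_eq v b, contract_swap, neg_neg]

/-- Maximal rank, in the terminology of the paper. -/
def Nondegenerate : Prop := ∀ v : M, (∀ u w : M, ω ![v, u, w] = 0) → v = 0

theorem compLinearMap_apply_vecCons₃ {M' : Type*} [AddCommGroup M'] [Module R M']
    (g : M' →ₗ[R] M) (a b c : M') : ω.compLinearMap g ![a, b, c] = ω ![g a, g b, g c] :=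
  congrArg ω (FinVec.map_eq g ![a, b, c]).symm

theorem injective_of_nondegenerate_compLinearMap {M' : Type*} [AddCommGroup M'] [Module R M']
    {g : M' →ₗ[R] M} (h : (ω.compLinearMap g).Nondegenerate) : Function.Injective g := by
  refine (injective_iff_map_eq_zero g).mpr fun x hx => h x fun u w => ?_
  rw [compLinearMap_apply_vecCons₃, hx]
  exact ω.map_coord_zero 0 rfl

end CommRing

end AlternatingMap

namespace LinearMap.BilinForm

section CommRing

variable {R M : Type*} [CommRing R] [AddCommGroup M] [Module R M]

def pfaffian (B : LinearMap.BilinForm R M) (x₁ x₂ x₃ x₄ : M) : R :=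
  B x₁ x₂ * B x₃ x₄ - B x₁ x₃ * B x₂ x₄ + B x₁ x₄ * B x₂ x₃

structure IsDarbouxFrame (B : LinearMap.BilinForm R M) (y₁ y₂ y₃ y₄ : M) : Prop where
  apply₁₂ : B y₁ y₂ = 1
  apply₃₄ : B y₃ y₄ = 1
  apply₁₃ : B y₁ y₃ = 0
  apply₁₄ : B y₁ y₄ = 0
  apply₂₃ : B y₂ y₃ = 0
  apply₂₄ : B y₂ y₄ = 0

variable {B : LinearMap.BilinForm R M} (hB : B.IsAlt)
include hB

theorem pfaffian_swap₂₃ (x₁ x₂ x₃ x₄ : M) :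
    pfaffian B x₁ x₃ x₂ x₄ = -pfaffian B x₁ x₂ x₃ x₄ := by
  simp only [pfaffian, ← hB.neg_eq x₂ x₃]
  ring

theorem pfaffian_swap₂₄ (x₁ x₂ x₃ x₄ : M) :
    pfaffian B x₁ x₄ x₃ x₂ = -pfaffian B x₁ x₂ x₃ x₄ := by
  simp only [pfaffian, ← hB.neg_eq x₂ x₃, ← hB.neg_eq x₂ x₄, ← hB.neg_eq x₃ x₄]
  ring

theorem IsDarbouxFrame.sub_smul {y₁ y₂ y₃ y₄ v : M} (hy : IsDarbouxFrame B y₁ y₂ y₃ y₄)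
    (hv : B v = 0) (c₁ c₂ c₃ c₄ : R) :
    IsDarbouxFrame B (y₁ - c₁ • v) (y₂ - c₂ • v) (y₃ - c₃ • v) (y₄ - c₄ • v) := by
  have hv' (x : M) : B x v = 0 := by rw [← hB.neg_eq, hv, LinearMap.zero_apply, neg_zero]
  constructor <;>
  simp [hv, hv', hy.apply₁₂, hy.apply₃₄, hy.apply₁₃, hy.apply₁₄, hy.apply₂₃, hy.apply₂₄]

end CommRing

section Field

variable {K M : Type*} [Field K] [AddCommGroup M] [Module K M]

/-- The projection onto the `B`-orthogonal complement of `span {x₁, x₂}` along that span,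
when `B x₁ x₂ ≠ 0`. -/
def complProj (B : LinearMap.BilinForm K M) (x₁ x₂ x : M) : M :=
  x + (B x₁ x₂)⁻¹ • (B x₂ x • x₁ - B x₁ x • x₂)

variable {B : LinearMap.BilinForm K M} (hB : B.IsAlt) {x₁ x₂ : M} (h : B x₁ x₂ ≠ 0)
include hB h

theorem apply_complProj_left (x : M) : B x₁ (complProj B x₁ x₂ x) = 0 := by
  simp only [complProj, map_add, map_smul, map_sub, hB.self_eq_zero, smul_eq_mul]
  field_simp
  ring

theorem apply_complProj_right (x : M) : B x₂ (complProj B x₁ x₂ x) = 0 := by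
  simp only [complProj, map_add, map_smul, map_sub, hB.self_eq_zero, smul_eq_mul,
    ← hB.neg_eq x₁ x₂]
  field_simp
  ring

theorem mul_apply_complProj_complProj (x₃ x₄ : M) :
    B x₁ x₂ * B (complProj B x₁ x₂ x₃) (complProj B x₁ x₂ x₄) = pfaffian B x₁ x₂ x₃ x₄ := by
  simp only [complProj, pfaffian, map_add, map_smul, map_sub, LinearMap.add_apply,
    LinearMap.sub_apply, LinearMap.smul_apply, hB.self_eq_zero, smul_eq_mul,
    ← hB.neg_eq x₁ x₂, ← hB.neg_eq x₁ x₃, ← hB.neg_eq x₂ x₃]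
  field_simp
  ring

theorem exists_isDarbouxFrame_of_apply_ne_zero {x₃ x₄ : M}
    (hpf : pfaffian B x₁ x₂ x₃ x₄ ≠ 0) : ∃ y₁ y₂ y₃ y₄, IsDarbouxFrame B y₁ y₂ y₃ y₄ := by
  have hc : B (complProj B x₁ x₂ x₃) (complProj B x₁ x₂ x₄) ≠ 0 :=
    right_ne_zero_of_mul (by rwa [mul_apply_complProj_complProj hB h])
  refine ⟨x₁, (B x₁ x₂)⁻¹ • x₂, complProj B x₁ x₂ x₃,
    (B (complProj B x₁ x₂ x₃) (complProj B x₁ x₂ x₄))⁻¹ • complProj B x₁ x₂ x₄,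
    ?_, ?_, ?_, ?_, ?_, ?_⟩
  all_goals simp only [map_smul, LinearMap.smul_apply, smul_eq_mul, apply_complProj_left hB h,
    apply_complProj_right hB h, mul_zero, inv_mul_cancel₀ h, inv_mul_cancel₀ hc]

end Field

theorem exists_isDarbouxFrame_of_pfaffian_ne_zero {K M : Type*} [Field K] [AddCommGroup M]
    [Module K M] {B : LinearMap.BilinForm K M} (hB : B.IsAlt) {x₁ x₂ x₃ x₄ : M}
    (hpf : pfaffian B x₁ x₂ x₃ x₄ ≠ 0) : ∃ y₁ y₂ y₃ y₄, IsDarbouxFrame B y₁ y₂ y₃ y₄ := by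
  have h : B x₁ x₂ ≠ 0 ∨ B x₁ x₃ ≠ 0 ∨ B x₁ x₄ ≠ 0 := by
    by_contra! h
    simp [pfaffian, h.1, h.2.1, h.2.2] at hpf
  rcases h with h | h | h
  · exact exists_isDarbouxFrame_of_apply_ne_zero hB h hpf
  · exact exists_isDarbouxFrame_of_apply_ne_zero hB h (by rwa [pfaffian_swap₂₃ hB, neg_ne_zero])
  · exact exists_isDarbouxFrame_of_apply_ne_zero hB h (by rwa [pfaffian_swap₂₄ hB, neg_ne_zero])

end LinearMap.BilinForm

namespace AlternatingMap

open LinearMap.BilinForm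

section Field

variable {K M : Type*} [Field K] [AddCommGroup M] [Module K M] (ω : M [⋀^Fin 3]→ₗ[K] K)

theorem contract_apply_eq_zero_of_pfaffian_eq_zero
    (hpf : ∀ v x₁ x₂ x₃ x₄ : M, pfaffian (ω.contract v) x₁ x₂ x₃ x₄ = 0) {e x₂ x₃ p q : M}
    (h : ω.contract e x₂ x₃ = 1) (hp₂ : ω.contract e x₂ p = 0) (hp₃ : ω.contract e x₃ p = 0)
    (hq₂ : ω.contract e x₂ q = 0) (hq₃ : ω.contract e x₃ q = 0) (u : M) :
    ω.contract u p q = 0 := by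
  have hB := ω.contract_isAlt e
  have hp₂' : ω.contract e p x₂ = 0 := by rw [← hB.neg_eq, hp₂, neg_zero]
  have hp₃' : ω.contract e p x₃ = 0 := by rw [← hB.neg_eq, hp₃, neg_zero]
  have hq₂' : ω.contract e q x₂ = 0 := by rw [← hB.neg_eq, hq₂, neg_zero]
  have hq₃' : ω.contract e q x₃ = 0 := by rw [← hB.neg_eq, hq₃, neg_zero]
  have hpq : ω.contract e p q = 0 := by
    simpa [pfaffian, h, hp₂', hp₃'] using hpf e p q x₂ x₃
  -- `ω.contract u p q` is the polarization of `v ↦ pfaffian (ω.contract v) p q x₂ x₃` at `(u, e)`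
  have hu := hpf u p q x₂ x₃
  have hue := hpf (u + e) p q x₂ x₃
  simp only [pfaffian, map_add, LinearMap.add_apply, h, hpq, hp₂', hp₃', hq₂', hq₃'] at hu hue
  linear_combination hue - hu

theorem contract_eq_zero_of_pfaffian_eq_zero
    (hpf : ∀ v x₁ x₂ x₃ x₄ : M, pfaffian (ω.contract v) x₁ x₂ x₃ x₄ = 0) {e x₂ x₃ x : M}
    (h : ω.contract e x₂ x₃ = 1) (hx₂ : ω.contract e x₂ x = 0) (hx₃ : ω.contract e x₃ x = 0)
    (hx : ω.contract x₂ x₃ x = 0) : ω.contract x = 0 := by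
  have hB := ω.contract_isAlt e
  have h₀ : ω.contract e x₂ x₃ ≠ 0 := h ▸ one_ne_zero
  set P := complProj (ω.contract e) x₂ x₃
  have hP₂ : ∀ a, ω.contract e x₂ (P a) = 0 := apply_complProj_left hB h₀
  have hP₃ : ∀ a, ω.contract e x₃ (P a) = 0 := apply_complProj_right hB h₀
  have hxP : ∀ a y, ω.contract y x (P a) = 0 := fun a y =>
    ω.contract_apply_eq_zero_of_pfaffian_eq_zero hpf h hx₂ hx₃ (hP₂ a) (hP₃ a) y
  have hx₂₃ : ω.contract x x₂ x₃ = 0 := by rw [← contract_rotate, hx]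
  have hdecomp : ∀ a, a = P a - (ω.contract e x₃ a • x₂ - ω.contract e x₂ a • x₃) := by
    intro a; simp [P, complProj, h]
  ext u w
  rw [hdecomp u, hdecomp w]
  simp only [map_sub, map_smul, LinearMap.sub_apply, LinearMap.smul_apply, smul_eq_mul,
    ω.contract_rotate x (P u), ω.contract_swap x x₂ (P w), ω.contract_swap x x₃ (P w),
    ← (ω.contract_isAlt x).neg_eq x₂ x₃, (ω.contract_isAlt x).self_eq_zero, hxP, hx₂₃]
  simp

theorem Nondegenerate.exists_pfaffian_contract_ne_zero (hω : ω.Nondegenerate)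
    (hM : 3 < Module.finrank K M) :
    ∃ v x₁ x₂ x₃ x₄ : M, pfaffian (ω.contract v) x₁ x₂ x₃ x₄ ≠ 0 := by
  by_contra! hpf
  have : FiniteDimensional K M := Module.finite_of_finrank_pos (by omega)
  have : Nontrivial M := Module.nontrivial_of_finrank_pos (R := K) (by omega)
  obtain ⟨e, he⟩ := exists_ne (0 : M)
  obtain ⟨x₂, x₃, h⟩ : ∃ x₂ x₃, ω.contract e x₂ x₃ = 1 := by
    obtain ⟨x₂, y, hy⟩ : ∃ x₂ y, ω.contract e x₂ y ≠ 0 := by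
      by_contra! h
      exact he (hω e h)
    exact ⟨x₂, (ω.contract e x₂ y)⁻¹ • y, by rw [map_smul, smul_eq_mul, inv_mul_cancel₀ hy]⟩
  let f : M →ₗ[K] Fin 3 → K :=
    LinearMap.pi ![ω.contract e x₂, ω.contract e x₃, ω.contract x₂ x₃]
  obtain ⟨x, hx, hx₀⟩ := Submodule.exists_mem_ne_zero_of_ne_bot
    (LinearMap.ker_ne_bot_of_finrank_lt (f := f) (by simpa using hM))
  have hfx (i : Fin 3) : f x i = 0 := congrFun (LinearMap.mem_ker.mp hx) i
  exact hx₀ (hω x fun u w => congrArg (· u w)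
    (ω.contract_eq_zero_of_pfaffian_eq_zero hpf h (hfx 0) (hfx 1) (hfx 2)))

end Field

theorem exists_isDarbouxFrame_contract_and_eq_zero {R M : Type*} [CommRing R] [AddCommGroup M]
    [Module R M] (ω : M [⋀^Fin 3]→ₗ[R] R) {v y₁ y₂ y₃ y₄ : M}
    (hy : IsDarbouxFrame (ω.contract v) y₁ y₂ y₃ y₄) :
    ∃ z₁ z₂ z₃ z₄, IsDarbouxFrame (ω.contract v) z₁ z₂ z₃ z₄ ∧
      ω.contract z₁ z₂ z₃ = 0 ∧ ω.contract z₁ z₂ z₄ = 0 ∧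
      ω.contract z₁ z₃ z₄ = 0 ∧ ω.contract z₂ z₃ z₄ = 0 := by
  refine ⟨y₁ - ω.contract y₁ y₃ y₄ • v, y₂ - ω.contract y₂ y₃ y₄ • v,
    y₃ - ω.contract y₁ y₂ y₃ • v, y₄ - ω.contract y₁ y₂ y₄ • v, ?_, ?_, ?_, ?_, ?_⟩
  · exact hy.sub_smul (ω.contract_isAlt v) (LinearMap.ext (ω.contract_apply_self v)) _ _ _ _
  all_goals
    simp only [map_sub, map_smul, LinearMap.sub_apply, LinearMap.smul_apply, smul_eq_mul,
      ω.contract_apply_self, (ω.contract_isAlt _).self_eq_zero, ω.contract_rotate _ _ v,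
      ω.contract_swap _ v, hy.apply₁₂, hy.apply₃₄, hy.apply₁₃, hy.apply₁₄, hy.apply₂₃,
      hy.apply₂₄]
    ring

section NormalForm

variable (R : Type*) [CommRing R]

def elementaryForm {n : ℕ} (i j k : Fin n) : (Fin n → R) [⋀^Fin 3]→ₗ[R] R :=
  Matrix.detRowAlternating.compLinearMap (LinearMap.pi fun r => LinearMap.proj (![i, j, k] r))

theorem elementaryForm_apply {n : ℕ} (i j k : Fin n) (a b c : Fin n → R) :
    elementaryForm R i j k ![a, b, c] = !![a i, b i, c i; a j, b j, c j; a k, b k, c k].det := by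
  change Matrix.det !![a i, a j, a k; b i, b j, b k; c i, c j, c k] = _
  rw [← Matrix.det_transpose]
  congr 1
  ext r s
  fin_cases r <;> fin_cases s <;> rfl

/-- `e^{123} + e^{145}`, with `Fin 5` indices starting at `0`. -/
def normalForm : (Fin 5 → R) [⋀^Fin 3]→ₗ[R] R :=
  elementaryForm R 0 1 2 + elementaryForm R 0 3 4

theorem normalForm_nondegenerate : (normalForm R).Nondegenerate := by
  intro c hc
  have h (j k : Fin 5) := hc (Pi.single j 1) (Pi.single k 1)
  simp only [normalForm, add_apply, elementaryForm_apply, Matrix.det_fin_three] at h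
  ext i
  fin_cases i
  · simpa using h 1 2
  · simpa using h 0 2
  · simpa using h 0 1
  · simpa using h 0 4
  · simpa using h 0 3

end NormalForm

theorem compLinearMap_constr_eq_normalForm {R M : Type*} [CommRing R] [AddCommGroup M]
    [Module R M] (ω : M [⋀^Fin 3]→ₗ[R] R) {u : Fin 5 → M}
    (hu : IsDarbouxFrame (ω.contract (u 0)) (u 1) (u 2) (u 3) (u 4))
    (h₁₂₃ : ω.contract (u 1) (u 2) (u 3) = 0) (h₁₂₄ : ω.contract (u 1) (u 2) (u 4) = 0)
    (h₁₃₄ : ω.contract (u 1) (u 3) (u 4) = 0) (h₂₃₄ : ω.contract (u 2) (u 3) (u 4) = 0) :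
    ω.compLinearMap ((Pi.basisFun R (Fin 5)).constr R u) = normalForm R := by
  set e := Pi.basisFun R (Fin 5)
  refine e.ext_alternating_of_strictMono fun v hv => ?_
  obtain ⟨i, j, k, rfl⟩ : ∃ i j k, v = ![i, j, k] :=
    ⟨v 0, v 1, v 2, by ext r; fin_cases r <;> rfl⟩
  have h₀₁ : i < j := hv (show (0 : Fin 3) < 1 by decide)
  have h₁₂ : j < k := hv (show (1 : Fin 3) < 2 by decide)
  clear hv
  rw [← FinVec.map_eq]
  change ω.compLinearMap (e.constr R u) ![e i, e j, e k] = normalForm R ![e i, e j, e k]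
  rw [compLinearMap_apply_vecCons₃, e.constr_basis, e.constr_basis, e.constr_basis]
  simp only [e, Pi.basisFun_apply]
  rw [← contract_apply, normalForm, add_apply, elementaryForm_apply, elementaryForm_apply]
  fin_cases i <;> fin_cases j <;> fin_cases k <;> (try (exfalso; revert h₀₁ h₁₂; decide)) <;>
    simp [Matrix.det_fin_three, hu.apply₁₂, hu.apply₃₄, hu.apply₁₃, hu.apply₁₄, hu.apply₂₃,
      hu.apply₂₄, h₁₂₃, h₁₂₄, h₁₃₄, h₂₃₄]

end AlternatingMap

open AlternatingMap LinearMap.BilinForm in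
/-- Every three-form of maximal rank in five variables is `GL₅`-equivalent to
`e^{123} + e^{145}`. -/
theorem rankFive_threeForm_normal_form
    (ω : AlternatingMap ℂ (Fin 5 → ℂ) ℂ (Fin 3))
    (hrk : ∀ v : Fin 5 → ℂ, (∀ u w : Fin 5 → ℂ, ω ![v, u, w] = 0) → v = 0) :
    ∃ g : (Fin 5 → ℂ) ≃ₗ[ℂ] (Fin 5 → ℂ), ∀ u v w : Fin 5 → ℂ,
      ω ![g u, g v, g w] = eDet 0 1 2 u v w + eDet 0 3 4 u v w := by
  obtain ⟨v, x₁, x₂, x₃, x₄, hpf⟩ :=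
    Nondegenerate.exists_pfaffian_contract_ne_zero ω hrk (by simp)
  obtain ⟨y₁, y₂, y₃, y₄, hy⟩ :=
    exists_isDarbouxFrame_of_pfaffian_ne_zero (ω.contract_isAlt v) hpf
  obtain ⟨z₁, z₂, z₃, z₄, hz, h₁₂₃, h₁₂₄, h₁₃₄, h₂₃₄⟩ :=
    ω.exists_isDarbouxFrame_contract_and_eq_zero hy
  set g := (Pi.basisFun ℂ (Fin 5)).constr ℂ ![v, z₁, z₂, z₃, z₄]
  have hg : ω.compLinearMap g = normalForm ℂ :=
    ω.compLinearMap_constr_eq_normalForm hz h₁₂₃ h₁₂₄ h₁₃₄ h₂₃₄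
  have hinj : Function.Injective g :=
    ω.injective_of_nondegenerate_compLinearMap (hg ▸ normalForm_nondegenerate ℂ)
  refine ⟨LinearEquiv.ofInjectiveEndo g hinj, fun a b c => ?_⟩
  have h := congr($hg ![a, b, c])
  rw [compLinearMap_apply_vecCons₃, normalForm, AlternatingMap.add_apply, elementaryForm_apply,
    elementaryForm_apply] at h
  exact h
end
end

section
/- Hurwitz–Jacobson theorem: let K be a field of characteristic ≠ 2 and let A be a composition algebra over K. Then the dimension of A over K is 1, 2, 4 or 8: Module.finrank K A ∈ ({1, 2, 4, 8} : Set ℕ). -/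
/-!
Cayley–Dickson doubling. Call a unital subalgebra `V` on which `polar Q` is nondegenerate a
composition subalgebra. If `V ≠ A`, the orthogonal complement of `V` contains some `a` with
`Q a ≠ 0`, and `V ⊕ V a` is again a composition subalgebra, of twice the dimension, with product
`(x + y a)(u + v a) = (x u - Q(a) v̄ y) + (v x + y ū) a`. Multiplicativity of `Q` on `V ⊕ V a`
forces `V` to be associative; associativity of `V ⊕ V a` forces `V` to be commutative, and
commutativity of `V ⊕ V a` forces `V ⊆ K·1`. Doubling `K·1` to dimensions 2, 4 and 8: if the
8-dimensional subalgebra were still proper it would be associative, so the 4-dimensional one would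
be commutative and the 2-dimensional one would lie in `K·1`, which is absurd.
-/

namespace CompositionAlgebra

open QuadraticMap Module

section Conj

variable {R A : Type*} [CommRing R] [NonAssocRing A] [Module R A]

def conj (Q : QuadraticForm R A) : A →ₗ[R] A :=
  ((polarBilin Q).flip 1).smulRight 1 - LinearMap.id

theorem conj_apply (Q : QuadraticForm R A) (x : A) : conj Q x = polar Q x 1 • 1 - x := rfl

theorem polar_conj_left (Q : QuadraticForm R A) (x y : A) :
    polar Q (conj Q x) y = polar Q x 1 * polar Q 1 y - polar Q x y := by
  rw [conj_apply, polar_sub_left, polar_smul_left, smul_eq_mul]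

theorem conj_eq_neg {Q : QuadraticForm R A} {a : A} (ha1 : polar Q 1 a = 0) :
    conj Q a = -a := by
  rw [conj_apply, polar_comm, ha1, zero_smul, zero_sub]

end Conj

section Multiplicative

variable {R A : Type*} [CommRing R] [NonAssocRing A] [Module R A] {Q : QuadraticForm R A}
  (hmul : ∀ x y : A, Q (x * y) = Q x * Q y)
include hmul

theorem polar_mul_mul_right (x z y : A) : polar Q (x * y) (z * y) = polar Q x z * Q y := by
  have h := hmul (x + z) y
  rw [add_mul] at h
  simp only [polar]
  linear_combination h - hmul x y - hmul z y

theorem polar_mul_mul_left (x y z : A) : polar Q (x * y) (x * z) = Q x * polar Q y z := by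
  have h := hmul x (y + z)
  rw [mul_add] at h
  simp only [polar]
  linear_combination h - hmul x y - hmul x z

theorem polar_mul_mul_add_polar_mul_mul (x u z w : A) :
    polar Q (x * u) (z * w) + polar Q (x * w) (z * u) = polar Q x z * polar Q u w := by
  have h := polar_mul_mul_right hmul x z (u + w)
  rw [mul_add, mul_add, polar_add_left, polar_add_right, polar_add_right,
    polar_mul_mul_right hmul, polar_mul_mul_right hmul, QuadraticMap.map_add Q] at h
  linear_combination h

theorem polar_mul_one (x y : A) :
    polar Q (x * y) 1 = polar Q x 1 * polar Q y 1 - polar Q x y := by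
  have h := polar_mul_mul_add_polar_mul_mul hmul x y 1 1
  rw [one_mul, mul_one, one_mul] at h
  linear_combination h

theorem polar_mul_left_eq [IsScalarTower R A A] (x y z : A) :
    polar Q (x * y) z = polar Q y (conj Q x * z) := by
  have h := polar_mul_mul_add_polar_mul_mul hmul 1 y x z
  rw [one_mul, one_mul, polar_comm Q 1 x] at h
  simp only [conj_apply, sub_mul, smul_mul_assoc, one_mul, polar_sub_right, polar_smul_right,
    smul_eq_mul]
  linear_combination polar_comm Q (x * y) z + h

theorem polar_mul_right_eq [SMulCommClass R A A] (x y z : A) :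
    polar Q (x * y) z = polar Q x (z * conj Q y) := by
  have h := polar_mul_mul_add_polar_mul_mul hmul x y z 1
  rw [mul_one, mul_one] at h
  simp only [conj_apply, mul_sub, mul_smul_comm, mul_one, polar_sub_right, polar_smul_right,
    smul_eq_mul]
  linear_combination h

end Multiplicative

section Nondegenerate

variable {K A : Type*} [Field K] [NonAssocRing A] [Nontrivial A] [Module K A]
  {Q : QuadraticForm K A}
  (hmul : ∀ x y : A, Q (x * y) = Q x * Q y) (hnd : ∀ x : A, (∀ y, polar Q x y = 0) → x = 0)
include hmul hnd

theorem apply_one : Q 1 = 1 := by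
  obtain ⟨x, hx⟩ := exists_ne (0 : A)
  obtain ⟨y, hy⟩ : ∃ y, polar Q x y ≠ 0 := by
    by_contra! h
    exact hx (hnd x h)
  have h := polar_mul_mul_right hmul x y 1
  rw [mul_one, mul_one] at h
  exact mul_left_cancel₀ hy (by linear_combination -h)

theorem polar_one_one : polar Q 1 1 = 2 := by
  rw [polar_self, apply_one hmul hnd, nsmul_eq_mul, Nat.cast_ofNat, mul_one]

theorem conj_conj (x : A) : conj Q (conj Q x) = x := by
  rw [conj_apply (x := conj Q x), conj_apply, polar_sub_left, polar_smul_left,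
    polar_one_one hmul hnd, smul_eq_mul]
  module

theorem conj_mul_mul [IsScalarTower K A A] (x y : A) : conj Q x * (x * y) = Q x • y := by
  rw [← sub_eq_zero]
  refine hnd _ fun z ↦ ?_
  rw [polar_sub_left, polar_smul_left, polar_mul_left_eq hmul, conj_conj hmul hnd,
    polar_mul_mul_left hmul, smul_eq_mul, sub_self]

theorem mul_mul_conj [SMulCommClass K A A] (x y : A) : y * x * conj Q x = Q x • y := by
  rw [← sub_eq_zero]
  refine hnd _ fun z ↦ ?_
  rw [polar_sub_left, polar_smul_left, polar_mul_right_eq hmul, conj_conj hmul hnd,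
    polar_mul_mul_right hmul, smul_eq_mul, polar_comm Q y z, mul_comm, sub_self]

theorem conj_mul_mul_add_conj_mul_mul [IsScalarTower K A A] (x v w : A) :
    conj Q x * (v * w) + conj Q v * (x * w) = polar Q x v • w := by
  have h := conj_mul_mul hmul hnd (x + v) w
  rw [map_add, add_mul, add_mul, mul_add, mul_add, conj_mul_mul hmul hnd x w,
    conj_mul_mul hmul hnd v w, QuadraticMap.map_add Q] at h
  linear_combination (norm := module) h

theorem mul_mul_conj_add_mul_mul_conj [SMulCommClass K A A] (x v w : A) :
    w * v * conj Q x + w * x * conj Q v = polar Q x v • w := by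
  have h := mul_mul_conj hmul hnd (x + v) w
  rw [map_add, mul_add, mul_add, add_mul, add_mul, mul_mul_conj hmul hnd x w,
    mul_mul_conj hmul hnd v w, QuadraticMap.map_add Q] at h
  linear_combination (norm := module) h

theorem conj_mul [IsScalarTower K A A] [SMulCommClass K A A] (x y : A) :
    conj Q (x * y) = conj Q y * conj Q x := by
  have h := conj_mul_mul_add_conj_mul_mul hmul hnd x y 1
  rw [mul_one, mul_one] at h
  simp only [conj_apply, sub_mul, mul_sub, smul_mul_assoc, mul_smul_comm, one_mul,
    mul_one, polar_mul_one hmul x y] at h ⊢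
  linear_combination (norm := module) h

end Nondegenerate

section Orthogonal

variable {K A : Type*} [Field K] [NonAssocRing A] [Nontrivial A] [Module K A]
  {Q : QuadraticForm K A}
  (hmul : ∀ x y : A, Q (x * y) = Q x * Q y) (hnd : ∀ x : A, (∀ y, polar Q x y = 0) → x = 0)
  {a : A} (ha1 : polar Q 1 a = 0)
include hmul hnd ha1

-- `ortho` in a name stands for the element `a`, orthogonal to `1`.

theorem conj_mul_ortho_mul [IsScalarTower K A A] {x : A} (hxa : polar Q x a = 0) (z : A) :
    conj Q x * (a * z) = a * (x * z) := by
  have h := conj_mul_mul_add_conj_mul_mul hmul hnd x a z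
  rw [conj_eq_neg ha1, hxa, zero_smul, neg_mul] at h
  linear_combination (norm := module) h

theorem mul_ortho_mul_conj [SMulCommClass K A A] {x : A} (hxa : polar Q x a = 0) (z : A) :
    z * a * conj Q x = z * x * a := by
  have h := mul_mul_conj_add_mul_mul_conj hmul hnd x a z
  rw [conj_eq_neg ha1, hxa, zero_smul, mul_neg] at h
  linear_combination (norm := module) h

theorem ortho_mul_conj [SMulCommClass K A A] {x : A} (hxa : polar Q x a = 0) :
    a * conj Q x = x * a := by
  simpa only [one_mul] using mul_ortho_mul_conj hmul hnd ha1 hxa 1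

theorem mul_ortho_mul [SMulCommClass K A A] {y : A} (hya : polar Q y a = 0) (z : A) :
    z * a * y = z * conj Q y * a := by
  have hya' : polar Q (conj Q y) a = 0 := by rw [polar_conj_left, ha1, hya, mul_zero, sub_zero]
  simpa only [conj_conj hmul hnd] using mul_ortho_mul_conj hmul hnd ha1 hya' z

theorem ortho_mul [SMulCommClass K A A] {x : A} (hxa : polar Q x a = 0) :
    a * x = conj Q x * a := by
  simpa only [one_mul] using mul_ortho_mul hmul hnd ha1 hxa 1

theorem mul_mul_ortho [IsScalarTower K A A] [SMulCommClass K A A] {x y : A}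
    (hxa : polar Q x a = 0) (hya : polar Q y a = 0) (hyxa : polar Q (y * x) a = 0) :
    x * (y * a) = y * x * a := by
  have hxa' : polar Q (conj Q x) a = 0 := by rw [polar_conj_left, ha1, hxa, mul_zero, sub_zero]
  calc x * (y * a) = conj Q (conj Q x) * (a * conj Q y) := by
        rw [conj_conj hmul hnd, ortho_mul_conj hmul hnd ha1 hya]
    _ = a * (conj Q x * conj Q y) := conj_mul_ortho_mul hmul hnd ha1 hxa' _
    _ = y * x * a := by rw [← conj_mul hmul hnd, ortho_mul_conj hmul hnd ha1 hyxa]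

theorem ortho_mul_ortho_mul [IsScalarTower K A A] (w : A) : a * (a * w) = -Q a • w := by
  have h := conj_mul_mul hmul hnd a w
  rw [conj_eq_neg ha1, neg_mul] at h
  linear_combination (norm := module) -h

theorem mul_ortho_mul_mul_ortho [IsScalarTower K A A] [SMulCommClass K A A] {x y : A}
    (hxa : polar Q x a = 0) (hya : polar Q y a = 0) (hxya : polar Q (x * y) a = 0) :
    x * a * (y * a) = -Q a • (conj Q y * x) := by
  have h := conj_mul_mul_add_conj_mul_mul hmul hnd (x * a) a (conj Q y)
  have hxa_conj : conj Q (x * a) = -(x * a) := by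
    rw [conj_mul hmul hnd, conj_eq_neg ha1, neg_mul, ortho_mul_conj hmul hnd ha1 hxa]
  have hxaa : polar Q (x * a) a = polar Q x 1 * Q a := by
    simpa only [one_mul] using polar_mul_mul_right hmul x 1 a
  rw [hxa_conj, conj_eq_neg ha1, ortho_mul_conj hmul hnd ha1 hya, neg_mul, neg_mul,
    mul_ortho_mul_conj hmul hnd ha1 hya, ← ortho_mul_conj hmul hnd ha1 hxya,
    ortho_mul_ortho_mul hmul hnd ha1, conj_mul hmul hnd, hxaa, conj_apply Q x, mul_sub,
    mul_smul_comm, mul_one] at h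
  linear_combination (norm := module) -h

end Orthogonal

section Subalgebra

variable {K A : Type*} [Field K] [NonAssocRing A] [Module K A] {Q : QuadraticForm K A}

structure IsCompositionSubalgebra (Q : QuadraticForm K A) (V : Submodule K A) : Prop where
  one_mem : (1 : A) ∈ V
  mul_mem : ∀ x ∈ V, ∀ y ∈ V, x * y ∈ V
  nondegenerate : ∀ x ∈ V, (∀ y ∈ V, polar Q x y = 0) → x = 0

def IsMulAssoc (V : Submodule K A) : Prop :=
  ∀ x ∈ V, ∀ y ∈ V, ∀ z ∈ V, x * y * z = x * (y * z)

def IsMulComm (V : Submodule K A) : Prop := ∀ x ∈ V, ∀ y ∈ V, x * y = y * x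

theorem IsCompositionSubalgebra.conj_mem {V : Submodule K A} (hV : IsCompositionSubalgebra Q V)
    {x : A} (hx : x ∈ V) : conj Q x ∈ V :=
  V.sub_mem (V.smul_mem _ hV.one_mem) hx

theorem exists_ortho_anisotropic [FiniteDimensional K A]
    (hnd : ∀ x : A, (∀ y, polar Q x y = 0) → x = 0) {V : Submodule K A}
    (hV : ∀ x ∈ V, (∀ y ∈ V, polar Q x y = 0) → x = 0) (hVtop : V ≠ ⊤) :
    ∃ a, (∀ v ∈ V, polar Q v a = 0) ∧ Q a ≠ 0 := by
  set W := LinearMap.BilinForm.orthogonal (polarBilin Q) V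
  have hcompl : IsCompl V W := by
    refine (LinearMap.BilinForm.isCompl_orthogonal_iff_disjoint fun x y h ↦ ?_).2 <|
      Submodule.disjoint_def.2 fun x hxV hxW ↦ hV x hxV fun y hy ↦ ?_
    · simpa only [polarBilin_apply_apply, polar_comm Q y x] using h
    · rw [polar_comm]; exact hxW y hy
  obtain ⟨z, hzW, hz⟩ := Submodule.exists_mem_ne_zero_of_ne_bot (p := W) fun h ↦
    hVtop (by rw [← hcompl.sup_eq_top, h, sup_bot_eq])
  obtain ⟨w, hw⟩ : ∃ w, polar Q z w ≠ 0 := by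
    by_contra! h
    exact hz (hnd z h)
  obtain ⟨v, hv, w', hw'W, rfl⟩ :=
    Submodule.mem_sup.1 (hcompl.sup_eq_top ▸ Submodule.mem_top : w ∈ V ⊔ W)
  -- If `Q` vanished on `W`, so would `polar Q`, and `z` would be orthogonal to `V ⊔ W = ⊤`.
  by_contra! hQ
  apply hw
  rw [polar_add_right, polar_comm, show polar Q v z = 0 from hzW v hv, zero_add, polar,
    hQ _ (W.add_mem hzW hw'W), hQ _ hzW, hQ _ hw'W, sub_zero, sub_zero]

theorem isCompositionSubalgebra_span_one [Nontrivial A] [IsScalarTower K A A]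
    [SMulCommClass K A A] (h2 : (2 : K) ≠ 0) (hmul : ∀ x y : A, Q (x * y) = Q x * Q y)
    (hnd : ∀ x : A, (∀ y, polar Q x y = 0) → x = 0) :
    IsCompositionSubalgebra Q (K ∙ (1 : A)) where
  one_mem := Submodule.mem_span_singleton_self 1
  mul_mem x hx y hy := by
    obtain ⟨c, rfl⟩ := Submodule.mem_span_singleton.1 hx
    obtain ⟨d, rfl⟩ := Submodule.mem_span_singleton.1 hy
    rw [smul_mul_smul_comm, one_mul]
    exact Submodule.smul_mem _ _ (Submodule.mem_span_singleton_self 1)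
  nondegenerate x hx h := by
    obtain ⟨c, rfl⟩ := Submodule.mem_span_singleton.1 hx
    have h1 := h 1 (Submodule.mem_span_singleton_self 1)
    rw [polar_smul_left, polar_one_one hmul hnd, smul_eq_mul, mul_eq_zero] at h1
    rw [h1.resolve_right h2, zero_smul]

theorem mul_left_injective_of_ne_zero (hmul : ∀ x y : A, Q (x * y) = Q x * Q y)
    (hnd : ∀ x : A, (∀ y, polar Q x y = 0) → x = 0) {a : A} (hQa : Q a ≠ 0) :
    Function.Injective (· * a) := by
  intro x y (h : x * a = y * a)
  rw [← sub_eq_zero]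
  refine hnd _ fun z ↦ (mul_eq_zero.1 ?_).resolve_right hQa
  rw [← polar_mul_mul_right hmul, sub_mul, h, sub_self, polar_zero_left]

section Ortho

variable [IsScalarTower K A A] {V : Submodule K A} {a : A}

def double (V : Submodule K A) (a : A) : Submodule K A := V ⊔ V.map (LinearMap.mulRight K a)

theorem mem_double {w : A} : w ∈ double V a ↔ ∃ x ∈ V, ∃ y ∈ V, x + y * a = w := by
  simp only [double, Submodule.mem_sup, Submodule.mem_map, LinearMap.mulRight_apply]
  constructor
  · rintro ⟨x, hx, _, ⟨y, hy, rfl⟩, rfl⟩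
    exact ⟨x, hx, y, hy, rfl⟩
  · rintro ⟨x, hx, y, hy, rfl⟩
    exact ⟨x, hx, _, ⟨y, hy, rfl⟩, rfl⟩

theorem le_double : V ≤ double V a := le_sup_left

theorem mul_ortho_mem_double {v : A} (hv : v ∈ V) : v * a ∈ double V a :=
  Submodule.mem_sup_right (Submodule.mem_map_of_mem hv)

variable (hmul : ∀ x y : A, Q (x * y) = Q x * Q y) (hV : IsCompositionSubalgebra Q V)
  (ha : ∀ v ∈ V, polar Q v a = 0)
include hmul hV ha

theorem polar_mul_ortho_eq_zero {y v : A} (hy : y ∈ V) (hv : v ∈ V) :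
    polar Q (y * a) v = 0 := by
  rw [polar_mul_left_eq hmul, polar_comm]
  exact ha _ (hV.mul_mem _ (hV.conj_mem hy) _ hv)

variable (hnd : ∀ x : A, (∀ y, polar Q x y = 0) → x = 0)
include hnd

theorem finrank_double [FiniteDimensional K A] (hQa : Q a ≠ 0) :
    finrank K (double V a) = 2 * finrank K V := by
  have hdisj : V ⊓ V.map (LinearMap.mulRight K a) = ⊥ := by
    refine (Submodule.eq_bot_iff _).2 fun z ⟨hzV, hz⟩ ↦ ?_
    obtain ⟨y, hy, rfl⟩ := Submodule.mem_map.1 hz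
    exact hV.nondegenerate _ hzV fun v hv ↦ polar_mul_ortho_eq_zero hmul hV ha hy hv
  have hmap : finrank K (V.map (LinearMap.mulRight K a)) = finrank K V :=
    (Submodule.equivMapOfInjective _ (mul_left_injective_of_ne_zero hmul hnd hQa) V).finrank_eq.symm
  have h := Submodule.finrank_sup_add_finrank_inf_eq V (V.map (LinearMap.mulRight K a))
  rw [hdisj, finrank_bot, add_zero, hmap] at h
  rw [double, h, two_mul]

variable [SMulCommClass K A A] [Nontrivial A]

/-- The exchange identity for `x`, `v * a`, `y * a`, `u`, with each product moved into `V * a`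
by the Cayley–Dickson rules. -/
theorem polar_mul_mul_conj_eq (hQa : Q a ≠ 0) {x u v y : A} (hx : x ∈ V) (hu : u ∈ V)
    (hv : v ∈ V) (hy : y ∈ V) :
    polar Q (v * x) (y * conj Q u) = polar Q (x * u) (conj Q v * y) := by
  have ha1 := ha 1 hV.one_mem
  have h := polar_mul_mul_add_polar_mul_mul hmul x (v * a) (y * a) u
  rw [polar_comm Q x, polar_mul_ortho_eq_zero hmul hV ha hy hx, zero_mul,
    mul_ortho_mul_mul_ortho hmul hnd ha1 (ha y hy) (ha v hv) (ha _ (hV.mul_mem _ hy _ hv)),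
    polar_smul_right, smul_eq_mul, mul_mul_ortho hmul hnd ha1 (ha x hx) (ha v hv)
      (ha _ (hV.mul_mem _ hv _ hx)), mul_ortho_mul hmul hnd ha1 (ha u hu),
    polar_mul_mul_right hmul] at h
  exact mul_right_cancel₀ hQa (by linear_combination h)

theorem IsCompositionSubalgebra.isMulAssoc_of_ortho (hQa : Q a ≠ 0) : IsMulAssoc V := by
  intro p hp q hq r hr
  have hmem : p * (q * r) - p * q * r ∈ V :=
    V.sub_mem (hV.mul_mem _ hp _ (hV.mul_mem _ hq _ hr)) (hV.mul_mem _ (hV.mul_mem _ hp _ hq) _ hr)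
  refine (sub_eq_zero.1 <| hV.nondegenerate _ hmem fun x hx ↦ ?_).symm
  have key := polar_mul_mul_conj_eq hmul hV ha hnd hQa hx (hV.conj_mem hr) (hV.conj_mem hp) hq
  rw [conj_conj hmul hnd, conj_conj hmul hnd] at key
  rw [polar_sub_left, polar_mul_left_eq hmul p, polar_mul_right_eq hmul (p * q),
    polar_comm Q (q * r), key, polar_comm Q (x * _), sub_self]

theorem mul_double_mul_double {x y u v : A} (hx : x ∈ V) (hy : y ∈ V) (hu : u ∈ V)
    (hv : v ∈ V) :
    (x + y * a) * (u + v * a) = (x * u - Q a • (conj Q v * y)) + (v * x + y * conj Q u) * a := by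
  have ha1 := ha 1 hV.one_mem
  rw [add_mul, mul_add, mul_add,
    mul_mul_ortho hmul hnd ha1 (ha x hx) (ha v hv) (ha _ (hV.mul_mem _ hv _ hx)),
    mul_ortho_mul hmul hnd ha1 (ha u hu),
    mul_ortho_mul_mul_ortho hmul hnd ha1 (ha y hy) (ha v hv) (ha _ (hV.mul_mem _ hy _ hv)), add_mul]
  module

theorem isCompositionSubalgebra_double (hQa : Q a ≠ 0) :
    IsCompositionSubalgebra Q (double V a) where
  one_mem := le_double hV.one_mem
  mul_mem w hw z hz := by
    obtain ⟨x, hx, y, hy, rfl⟩ := mem_double.1 hw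
    obtain ⟨u, hu, v, hv, rfl⟩ := mem_double.1 hz
    rw [mul_double_mul_double hmul hV ha hnd hx hy hu hv]
    exact mem_double.2 ⟨_, V.sub_mem (hV.mul_mem _ hx _ hu)
      (V.smul_mem _ (hV.mul_mem _ (hV.conj_mem hv) _ hy)), _,
      V.add_mem (hV.mul_mem _ hv _ hx) (hV.mul_mem _ hy _ (hV.conj_mem hu)), rfl⟩
  nondegenerate w hw h := by
    obtain ⟨x, hx, y, hy, rfl⟩ := mem_double.1 hw
    have hx0 : x = 0 := hV.nondegenerate x hx fun v hv ↦ by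
      simpa only [polar_add_left, polar_mul_ortho_eq_zero hmul hV ha hy hv, add_zero]
        using h v (le_double hv)
    have hy0 : y = 0 := hV.nondegenerate y hy fun v hv ↦ by
      refine (mul_eq_zero.1 ?_).resolve_right hQa
      rw [← polar_mul_mul_right hmul, ← zero_add (y * a), ← hx0]
      exact h _ (mul_ortho_mem_double hv)
    rw [hx0, hy0, zero_mul, add_zero]

theorem isMulComm_of_isMulAssoc_double (hQa : Q a ≠ 0) (h : IsMulAssoc (double V a)) :
    IsMulComm V := by
  have ha1 := ha 1 hV.one_mem
  intro x hx y hy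
  apply mul_left_injective_of_ne_zero hmul hnd hQa
  have hassoc := h a (by simpa using mul_ortho_mem_double hV.one_mem)
    _ (le_double (hV.conj_mem hx)) _ (le_double (hV.conj_mem hy))
  rwa [ortho_mul_conj hmul hnd ha1 (ha x hx), mul_ortho_mul_conj hmul hnd ha1 (ha y hy),
    ← conj_mul hmul hnd, ortho_mul_conj hmul hnd ha1 (ha _ (hV.mul_mem _ hy _ hx))] at hassoc

theorem le_span_one_of_isMulComm_double (h2 : (2 : K) ≠ 0) (hQa : Q a ≠ 0)
    (h : IsMulComm (double V a)) : V ≤ K ∙ (1 : A) := by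
  intro p hp
  have hpa := h p (le_double hp) a (by simpa using mul_ortho_mem_double hV.one_mem)
  rw [ortho_mul hmul hnd (ha 1 hV.one_mem) (ha p hp)] at hpa
  have hconj : p = conj Q p := mul_left_injective_of_ne_zero hmul hnd hQa hpa
  rw [conj_apply] at hconj
  refine Submodule.mem_span_singleton.2 ⟨2⁻¹ * polar Q p 1, ?_⟩
  have h2p : (2 : K) • p = polar Q p 1 • 1 := by
    rw [two_smul]
    nth_rw 1 [hconj]
    abel
  rw [mul_smul, ← h2p, smul_smul, inv_mul_cancel₀ h2, one_smul]

end Ortho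

variable [IsScalarTower K A A] [SMulCommClass K A A] [Nontrivial A] [FiniteDimensional K A]
  {V : Submodule K A} (hmul : ∀ x y : A, Q (x * y) = Q x * Q y)
  (hnd : ∀ x : A, (∀ y, polar Q x y = 0) → x = 0) (hV : IsCompositionSubalgebra Q V)
  (hVtop : V ≠ ⊤)
include hmul hnd hV hVtop

theorem IsCompositionSubalgebra.exists_double (h2 : (2 : K) ≠ 0) :
    ∃ W, IsCompositionSubalgebra Q W ∧ finrank K W = 2 * finrank K V ∧
      (IsMulAssoc W → IsMulComm V) ∧ (IsMulComm W → V ≤ K ∙ (1 : A)) := by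
  obtain ⟨a, ha, hQa⟩ := exists_ortho_anisotropic hnd hV.nondegenerate hVtop
  exact ⟨double V a, isCompositionSubalgebra_double hmul hV ha hnd hQa,
    finrank_double hmul hV ha hnd hQa, isMulComm_of_isMulAssoc_double hmul hV ha hnd hQa,
    le_span_one_of_isMulComm_double hmul hV ha hnd h2 hQa⟩

theorem IsCompositionSubalgebra.isMulAssoc_of_ne_top : IsMulAssoc V := by
  obtain ⟨a, ha, hQa⟩ := exists_ortho_anisotropic hnd hV.nondegenerate hVtop
  exact hV.isMulAssoc_of_ortho hmul ha hnd hQa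

end Subalgebra

end CompositionAlgebra

open CompositionAlgebra QuadraticMap Module in
/-- Hurwitz–Jacobson theorem: a composition algebra over a field `K` of characteristic ≠ 2
(a unital, not necessarily associative or commutative `K`-algebra with a multiplicative
nondegenerate quadratic form) has dimension 1, 2, 4 or 8 over `K`. -/
theorem hurwitz_jacobson
    (K : Type*) [Field K] (h2 : (2 : K) ≠ 0)
    (A : Type*) [NonAssocRing A] [Module K A] [IsScalarTower K A A] [SMulCommClass K A A]
    [Nontrivial A] [FiniteDimensional K A]
    (Q : QuadraticForm K A)
    (hmul : ∀ x y : A, Q (x * y) = Q x * Q y)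
    (hnd : ∀ x : A, (∀ y : A, (Q (x + y) - Q x - Q y) / 2 = 0) → x = 0) :
    Module.finrank K A ∈ ({1, 2, 4, 8} : Set ℕ) := by
  have hnd' : ∀ x : A, (∀ y, polar Q x y = 0) → x = 0 :=
    fun x h ↦ hnd x fun y ↦ by rw [← polar, h y, zero_div]
  have hr {V : Submodule K A} (h : V = ⊤) : finrank K A = finrank K V := by rw [h, finrank_top]
  have hV0 := isCompositionSubalgebra_span_one h2 hmul hnd'
  have hr0 : finrank K (K ∙ (1 : A)) = 1 := finrank_span_singleton one_ne_zero
  by_cases hT0 : K ∙ (1 : A) = ⊤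
  · simp [hr hT0, hr0]
  obtain ⟨V1, hV1, hr1, -, -⟩ := hV0.exists_double hmul hnd' hT0 h2
  by_cases hT1 : V1 = ⊤
  · simp [hr hT1, hr1, hr0]
  obtain ⟨V2, hV2, hr2, -, hc2⟩ := hV1.exists_double hmul hnd' hT1 h2
  by_cases hT2 : V2 = ⊤
  · simp [hr hT2, hr2, hr1, hr0]
  obtain ⟨V3, hV3, hr3, ha3, -⟩ := hV2.exists_double hmul hnd' hT2 h2
  by_cases hT3 : V3 = ⊤
  · simp [hr hT3, hr3, hr2, hr1, hr0]
  have := Submodule.finrank_mono (hc2 (ha3 (hV3.isMulAssoc_of_ne_top hmul hnd' hT3)))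
  omega
end

section
/- Hurwitz's theorem (1898): let A be a Euclidean Hurwitz algebra (real normed division algebra). Then A is isomorphic to one of ℝ, ℂ, the quaternions ℍ = Quaternion ℝ, or the octonions 𝕆: there exist one of these four algebras B and an ℝ-linear bijection φ : B ≃ₗ[ℝ] A with φ(1) = 1 and φ(x*y) = φ(x)*φ(y) for all x, y ∈ B. -/
/-!
Polarizing `‖x y‖ = ‖x‖ ‖y‖` shows that multiplication by `x` is adjoint to multiplication by
its conjugate `x̄ = 2 ⟪x, 1⟫ 1 - x`. This yields the Cayley–Dickson doubling identities: if `B`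
is a unital subalgebra and `i ⟂ B` is a unit vector, then `(a + b i)(c + d i) =
(a c - d̄ b) + (d a + b c̄) i` for `a, b, c, d ∈ B`, so `B ⊕ B i` is a copy of the Cayley–Dickson
double of `B`. Doubling `ℝ 1` as long as the image is proper produces copies of `ℂ`, `ℍ` and `𝕆`.
The process stops there: comparing both sides of `‖(b + x i)(c + a i)‖² = ‖b + x i‖² ‖c + a i‖²`
shows that a subalgebra with a unit vector orthogonal to it is associative, whereas `𝕆`, the
double of the noncommutative `ℍ`, is not.
-/

noncomputable section

/-- The Cayley–Dickson product on the real octonions `𝕆 = Quaternion ℝ × Quaternion ℝ`: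
`(a,b)·(c,d) = (a c - d* b, b c* + d a)`. -/
def octMul (x y : Quaternion ℝ × Quaternion ℝ) : Quaternion ℝ × Quaternion ℝ :=
  (x.1 * y.1 - star y.2 * x.2, x.2 * star y.1 + y.2 * x.1)

open scoped RealInnerProductSpace

section CayleyDickson

variable {K : Type*} [NonAssocRing K] [Star K]

def cayleyDicksonMul (p q : K × K) : K × K :=
  (p.1 * q.1 - star q.2 * p.2, p.2 * star q.1 + q.2 * p.1)

def cayleyDicksonStar (p : K × K) : K × K := (star p.1, -p.2)

theorem cayleyDicksonMul_not_assoc {a b : K} (h : a * b ≠ b * a) :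
    cayleyDicksonMul (a, 0) (cayleyDicksonMul (b, 0) (0, 1)) ≠
      cayleyDicksonMul (cayleyDicksonMul (a, 0) (b, 0)) (0, 1) := by
  simpa [cayleyDicksonMul] using h.symm

structure IsCayleyDicksonDouble {K' : Type*} [NonAssocRing K'] [Star K'] [Module ℝ K']
    [Module ℝ K] (f : K' →ₗ[ℝ] K × K) : Prop where
  injective : Function.Injective f
  map_one : f 1 = (1, 0)
  map_mul : ∀ x y, f (x * y) = cayleyDicksonMul (f x) (f y)
  map_star : ∀ x, f (star x) = cayleyDicksonStar (f x)

end CayleyDickson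

theorem isCayleyDicksonDouble_complex :
    IsCayleyDicksonDouble (Complex.equivRealProdLm : ℂ →ₗ[ℝ] ℝ × ℝ) where
  injective := Complex.equivRealProdLm.injective
  map_one := by ext <;> simp
  map_mul z w := by
    ext <;> simp only [LinearEquiv.coe_coe, Complex.equivRealProdLm_apply, Complex.mul_re,
      Complex.mul_im, cayleyDicksonMul, star_trivial] <;> ring
  map_star z := by ext <;> simp [cayleyDicksonStar]

-- `q = (re + imI i) + (imJ + imK i) j`
def quaternionToComplexPair : Quaternion ℝ →ₗ[ℝ] ℂ × ℂ where
  toFun q := (⟨q.re, q.imI⟩, ⟨q.imJ, q.imK⟩)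
  map_add' _ _ := rfl
  map_smul' _ _ := by simp [Prod.ext_iff, Complex.ext_iff]

@[simp]
theorem quaternionToComplexPair_apply (q : Quaternion ℝ) :
    quaternionToComplexPair q = (⟨q.re, q.imI⟩, ⟨q.imJ, q.imK⟩) := rfl

theorem isCayleyDicksonDouble_quaternion : IsCayleyDicksonDouble quaternionToComplexPair where
  injective p q h := by
    simp only [quaternionToComplexPair_apply, Prod.mk.injEq, Complex.mk.injEq] at h
    ext <;> tauto
  map_one := by
    simp [Prod.ext_iff, Complex.ext_iff, Quaternion.re_one, Quaternion.imI_one,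
      Quaternion.imJ_one, Quaternion.imK_one]
  map_mul p q := by
    simp only [quaternionToComplexPair_apply, Quaternion.re_mul, Quaternion.imI_mul,
      Quaternion.imJ_mul, Quaternion.imK_mul, cayleyDicksonMul, RCLike.star_def, Prod.ext_iff,
      Complex.ext_iff, Complex.sub_re, Complex.mul_re, Complex.conj_re, Complex.conj_im, neg_mul,
      sub_neg_eq_add, Complex.sub_im, Complex.mul_im, Complex.add_re, mul_neg, Complex.add_im]
    constructor <;> constructor <;> ring
  map_star q := by simp [cayleyDicksonStar, Prod.ext_iff, Complex.ext_iff]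

theorem Quaternion.exists_mul_ne_mul : ∃ a b : Quaternion ℝ, a * b ≠ b * a := by
  let a : Quaternion ℝ := ⟨0, 1, 0, 0⟩
  let b : Quaternion ℝ := ⟨0, 0, 1, 0⟩
  refine ⟨a, b, fun h => ?_⟩
  have := congrArg QuaternionAlgebra.imK h
  rw [Quaternion.imK_mul, Quaternion.imK_mul] at this
  norm_num [a, b] at this

theorem norm_eq_one_of_one_mul {A : Type*} [NormedAddCommGroup A] [Module ℝ A] [Nontrivial A]
    {mul : A →ₗ[ℝ] A →ₗ[ℝ] A} {e : A} (h_one_mul : ∀ x, mul e x = x)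
    (hnorm : ∀ x y, ‖mul x y‖ = ‖x‖ * ‖y‖) : ‖e‖ = 1 := by
  have he : e ≠ 0 := by
    obtain ⟨x, hx⟩ := exists_ne (0 : A)
    rintro rfl
    exact hx (by rw [← h_one_mul x, map_zero, LinearMap.zero_apply])
  have h := hnorm e e
  rw [h_one_mul] at h
  exact (mul_eq_left₀ (norm_ne_zero_iff.mpr he)).mp h.symm

theorem Submodule.exists_inner_self_eq_one_mem_orthogonal {E : Type*} [NormedAddCommGroup E]
    [InnerProductSpace ℝ E] [FiniteDimensional ℝ E] {B : Submodule ℝ E} (hB : B ≠ ⊤) :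
    ∃ i ∈ Bᗮ, ⟪i, i⟫ = 1 := by
  obtain ⟨v, hv, hv0⟩ := Submodule.exists_mem_ne_zero_of_ne_bot
    (mt Submodule.orthogonal_eq_bot_iff.mp hB)
  refine ⟨(‖v‖⁻¹ : ℝ) • v, Bᗮ.smul_mem _ hv, ?_⟩
  rw [real_inner_self_eq_norm_sq, norm_smul, norm_inv, norm_norm,
    inv_mul_cancel₀ (norm_ne_zero_iff.mpr hv0), one_pow]

structure HurwitzAlgebra (A : Type*) [NormedAddCommGroup A] [InnerProductSpace ℝ A] where
  mul : A →ₗ[ℝ] A →ₗ[ℝ] A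
  one : A
  one_mul : ∀ x, mul one x = x
  mul_one : ∀ x, mul x one = x
  norm_one : ‖one‖ = 1
  norm_mul : ∀ x y, ‖mul x y‖ = ‖x‖ * ‖y‖

namespace HurwitzAlgebra

variable {A : Type*} [NormedAddCommGroup A] [InnerProductSpace ℝ A] (H : HurwitzAlgebra A)

local infixl:70 " ⋆ " => H.mul

theorem inner_one_one : ⟪H.one, H.one⟫ = 1 := by
  rw [real_inner_self_eq_norm_sq, H.norm_one, one_pow]

theorem inner_mul_self (x y : A) : ⟪x ⋆ y, x ⋆ y⟫ = ⟪x, x⟫ * ⟪y, y⟫ := by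
  simp only [real_inner_self_eq_norm_sq, H.norm_mul, mul_pow]

theorem inner_mul_mul_left (x y z : A) : ⟪x ⋆ y, x ⋆ z⟫ = ⟪x, x⟫ * ⟪y, z⟫ := by
  have h := H.inner_mul_self x (y + z)
  simp only [map_add, inner_add_left, inner_add_right, inner_mul_self] at h
  rw [real_inner_comm (x ⋆ y), real_inner_comm y z] at h
  linarith

theorem inner_mul_mul_right (x y z : A) : ⟪x ⋆ z, y ⋆ z⟫ = ⟪x, y⟫ * ⟪z, z⟫ := by
  have h := H.inner_mul_self (x + y) z
  simp only [map_add, LinearMap.add_apply, inner_add_left, inner_add_right, inner_mul_self] at h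
  rw [real_inner_comm (x ⋆ z), real_inner_comm x y] at h
  linarith

theorem inner_mul_mul_add_inner_mul_mul_left (x y u z : A) :
    ⟪x ⋆ y, u ⋆ z⟫ + ⟪u ⋆ y, x ⋆ z⟫ = 2 * ⟪x, u⟫ * ⟪y, z⟫ := by
  have h := H.inner_mul_mul_left (x + u) y z
  simp only [map_add, LinearMap.add_apply, inner_add_left, inner_add_right,
    inner_mul_mul_left] at h
  rw [real_inner_comm x u] at h
  linarith

theorem inner_mul_mul_add_inner_mul_mul_right (x y u z : A) :
    ⟪x ⋆ y, u ⋆ z⟫ + ⟪x ⋆ z, u ⋆ y⟫ = 2 * ⟪x, u⟫ * ⟪y, z⟫ := by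
  have h := H.inner_mul_mul_right x u (y + z)
  simp only [map_add, inner_add_left, inner_add_right, inner_mul_mul_right] at h
  rw [real_inner_comm y z] at h
  linarith

def conj : A →ₗ[ℝ] A where
  toFun x := (2 * ⟪x, H.one⟫) • H.one - x
  map_add' x y := by simp only [inner_add_left]; module
  map_smul' r x := by simp only [real_inner_smul_left, RingHom.id_apply]; module

theorem conj_apply (x : A) : H.conj x = (2 * ⟪x, H.one⟫) • H.one - x := rfl

theorem conj_one : H.conj H.one = H.one := by
  rw [conj_apply, inner_one_one]; module

theorem conj_conj (x : A) : H.conj (H.conj x) = x := by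
  simp only [conj_apply, inner_sub_left, real_inner_smul_left, inner_one_one]; module

theorem inner_conj_conj (x y : A) : ⟪H.conj x, H.conj y⟫ = ⟪x, y⟫ := by
  simp only [conj_apply, inner_sub_left, inner_sub_right, real_inner_smul_left,
    real_inner_smul_right, inner_one_one, real_inner_comm H.one y]
  ring

theorem inner_conj_right (x y : A) : ⟪x, H.conj y⟫ = ⟪H.conj x, y⟫ := by
  simp only [conj_apply, inner_sub_left, inner_sub_right, real_inner_smul_left,
    real_inner_smul_right, real_inner_comm H.one y]
  ring

theorem conj_eq_neg {i : A} (hi1 : ⟪i, H.one⟫ = 0) : H.conj i = -i := by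
  simp [conj_apply, hi1]

theorem inner_conj_eq_zero {i b : A} (hi1 : ⟪i, H.one⟫ = 0) (hib : ⟪i, b⟫ = 0) :
    ⟪i, H.conj b⟫ = 0 := by
  rw [inner_conj_right, conj_eq_neg H hi1, inner_neg_left, hib, neg_zero]

theorem inner_mul_eq_inner_conj_mul (x y z : A) : ⟪x ⋆ y, z⟫ = ⟪y, H.conj x ⋆ z⟫ := by
  have h := H.inner_mul_mul_add_inner_mul_mul_left x y H.one z
  rw [H.one_mul, H.one_mul] at h
  simp only [conj_apply, map_sub, map_smul, LinearMap.sub_apply, LinearMap.smul_apply,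
    inner_sub_right, real_inner_smul_right, H.one_mul]
  linarith

theorem inner_mul_eq_inner_mul_conj (x y z : A) : ⟪x ⋆ y, z⟫ = ⟪x, z ⋆ H.conj y⟫ := by
  have h := H.inner_mul_mul_add_inner_mul_mul_left x y z H.one
  rw [H.mul_one, H.mul_one, real_inner_comm x] at h
  simp only [conj_apply, map_sub, map_smul, inner_sub_right, real_inner_smul_right, H.mul_one]
  linarith

theorem conj_mul_mul_add_conj_mul_mul (x u y : A) :
    H.conj x ⋆ (u ⋆ y) + H.conj u ⋆ (x ⋆ y) = (2 * ⟪x, u⟫) • y := by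
  refine ext_inner_right ℝ fun z => ?_
  rw [inner_add_left, H.inner_mul_eq_inner_conj_mul (H.conj x),
    H.inner_mul_eq_inner_conj_mul (H.conj u), conj_conj, conj_conj, real_inner_smul_left]
  linarith [H.inner_mul_mul_add_inner_mul_mul_left x y u z]

theorem mul_mul_conj_add_mul_mul_conj (x u y : A) :
    y ⋆ x ⋆ H.conj u + y ⋆ u ⋆ H.conj x = (2 * ⟪x, u⟫) • y := by
  refine ext_inner_right ℝ fun z => ?_
  rw [inner_add_left, H.inner_mul_eq_inner_mul_conj (y ⋆ x),
    H.inner_mul_eq_inner_mul_conj (y ⋆ u), conj_conj, conj_conj, real_inner_smul_left]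
  linarith [H.inner_mul_mul_add_inner_mul_mul_right y x z u]

theorem conj_mul (x y : A) : H.conj (x ⋆ y) = H.conj y ⋆ H.conj x := by
  refine ext_inner_right ℝ fun z => ?_
  calc ⟪H.conj (x ⋆ y), z⟫ = ⟪x ⋆ y, H.conj z⟫ := (H.inner_conj_right _ _).symm
    _ = ⟪y, H.conj x ⋆ H.conj z⟫ := H.inner_mul_eq_inner_conj_mul _ _ _
    _ = ⟪H.conj x, y ⋆ z⟫ := by rw [real_inner_comm, inner_mul_eq_inner_mul_conj, conj_conj]
    _ = ⟪H.conj y ⋆ H.conj x, z⟫ := by rw [inner_mul_eq_inner_conj_mul, conj_conj]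

theorem inner_mul_eq_sub_inner_mul (a i b : A) :
    ⟪a ⋆ i, b⟫ = 2 * ⟪a, H.one⟫ * ⟪i, b⟫ - ⟪i, a ⋆ b⟫ := by
  rw [inner_mul_eq_inner_conj_mul, conj_apply, map_sub, map_smul, LinearMap.sub_apply,
    LinearMap.smul_apply, H.one_mul, inner_sub_right, real_inner_smul_right, mul_assoc]

section Perp

variable {i : A}

theorem conj_mul_eq_neg (hi1 : ⟪i, H.one⟫ = 0) {a : A} (hia : ⟪i, a⟫ = 0) :
    H.conj (a ⋆ i) = -(a ⋆ i) :=
  H.conj_eq_neg (by rw [inner_mul_eq_sub_inner_mul, H.mul_one, hi1, hia]; ring)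

theorem mul_perp_mul_perp (hi1 : ⟪i, H.one⟫ = 0) (hii : ⟪i, i⟫ = 1) (a : A) :
    a ⋆ i ⋆ i = -a := by
  have h := H.mul_mul_conj_add_mul_mul_conj i i a
  rw [conj_eq_neg H hi1, hii, map_neg] at h
  linear_combination (norm := module) (-1 / 2 : ℝ) • h

theorem mul_perp_mul (hi1 : ⟪i, H.one⟫ = 0) (a : A) {b : A} (hib : ⟪i, b⟫ = 0) :
    a ⋆ i ⋆ b = a ⋆ H.conj b ⋆ i := by
  have h := H.mul_mul_conj_add_mul_mul_conj i (H.conj b) a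
  rw [conj_conj, conj_eq_neg H hi1, inner_conj_eq_zero H hi1 hib, map_neg, mul_zero,
    zero_smul] at h
  linear_combination (norm := module) h

theorem perp_mul (hi1 : ⟪i, H.one⟫ = 0) {b : A} (hib : ⟪i, b⟫ = 0) :
    i ⋆ b = H.conj b ⋆ i := by
  simpa only [H.one_mul] using H.mul_perp_mul hi1 H.one hib

theorem mul_mul_perp (hi1 : ⟪i, H.one⟫ = 0) {a b : A} (hia : ⟪i, a⟫ = 0) (hib : ⟪i, b⟫ = 0)
    (hiba : ⟪i, b ⋆ a⟫ = 0) : a ⋆ (b ⋆ i) = b ⋆ a ⋆ i := by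
  have h := H.conj_mul_mul_add_conj_mul_mul i (H.conj a) (H.conj b)
  rw [conj_conj, conj_eq_neg H hi1, inner_conj_eq_zero H hi1 hia, map_neg, LinearMap.neg_apply,
    mul_zero, zero_smul] at h
  calc a ⋆ (b ⋆ i) = a ⋆ (i ⋆ H.conj b) := by
        rw [H.perp_mul hi1 (H.inner_conj_eq_zero hi1 hib), conj_conj]
    _ = i ⋆ H.conj (b ⋆ a) := by rw [conj_mul]; linear_combination (norm := module) h
    _ = b ⋆ a ⋆ i := by rw [H.perp_mul hi1 (H.inner_conj_eq_zero hi1 hiba), conj_conj]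

theorem mul_perp_mul_mul_perp (hi1 : ⟪i, H.one⟫ = 0) (hii : ⟪i, i⟫ = 1) {a b : A}
    (hia : ⟪i, a⟫ = 0) (hib : ⟪i, b⟫ = 0) (hiab : ⟪i, a ⋆ b⟫ = 0) :
    a ⋆ i ⋆ (b ⋆ i) = -(H.conj b ⋆ a) := by
  refine ext_inner_right ℝ fun z => ?_
  have hba : ⟪b, a ⋆ i⟫ = 0 := by
    rw [real_inner_comm, inner_mul_eq_sub_inner_mul, hib, hiab]; ring
  have h := H.inner_mul_mul_add_inner_mul_mul_left b i (a ⋆ i) z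
  rw [hba, mul_perp_mul_perp H hi1 hii, inner_neg_left] at h
  rw [inner_mul_eq_inner_conj_mul, conj_mul_eq_neg H hi1 hia, map_neg, LinearMap.neg_apply,
    inner_neg_right, inner_neg_left, H.inner_mul_eq_inner_conj_mul (H.conj b), conj_conj]
  linarith

end Perp

structure IsSubalgebra (B : Submodule ℝ A) : Prop where
  one_mem : H.one ∈ B
  mul_mem : ∀ {x y : A}, x ∈ B → y ∈ B → x ⋆ y ∈ B

theorem isSubalgebra_range {M : Type*} [AddCommGroup M] [Module ℝ M] {φ : M →ₗ[ℝ] A}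
    {m : M → M → M} {u : M} (hu : φ u = H.one) (hm : ∀ p q, φ (m p q) = φ p ⋆ φ q) :
    H.IsSubalgebra (LinearMap.range φ) where
  one_mem := ⟨u, hu⟩
  mul_mem := by
    rintro _ _ ⟨p, rfl⟩ ⟨q, rfl⟩
    exact ⟨m p q, hm p q⟩

theorem inner_self_mul_sub_conj_mul (a b c d : A) :
    ⟪a ⋆ c - H.conj d ⋆ b, a ⋆ c - H.conj d ⋆ b⟫ =
      ⟪a, a⟫ * ⟪c, c⟫ - 2 * ⟪b, d ⋆ (a ⋆ c)⟫ + ⟪d, d⟫ * ⟪b, b⟫ := by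
  have hcross : ⟪a ⋆ c, H.conj d ⋆ b⟫ = ⟪b, d ⋆ (a ⋆ c)⟫ := by
    rw [real_inner_comm, inner_mul_eq_inner_conj_mul, conj_conj]
  rw [inner_sub_left, inner_sub_right, inner_sub_right, inner_mul_self, inner_mul_self,
    inner_conj_conj, real_inner_comm (a ⋆ c), hcross]
  ring

theorem inner_self_mul_add_mul_conj (a b c d : A) :
    ⟪d ⋆ a + b ⋆ H.conj c, d ⋆ a + b ⋆ H.conj c⟫ =
      ⟪d, d⟫ * ⟪a, a⟫ + 2 * ⟪b, d ⋆ a ⋆ c⟫ + ⟪b, b⟫ * ⟪c, c⟫ := by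
  have hcross : ⟪d ⋆ a, b ⋆ H.conj c⟫ = ⟪b, d ⋆ a ⋆ c⟫ := by
    rw [real_inner_comm, inner_mul_eq_inner_mul_conj, conj_conj]
  rw [inner_add_left, inner_add_right, inner_add_right, inner_mul_self, inner_mul_self,
    inner_conj_conj, real_inner_comm (d ⋆ a), hcross]
  ring

section Subalgebra

variable {H} {B : Submodule ℝ A} {i : A}

theorem IsSubalgebra.conj_mem (hB : H.IsSubalgebra B) {x : A} (hx : x ∈ B) : H.conj x ∈ B :=
  B.sub_mem (B.smul_mem _ hB.one_mem) hx

theorem inner_self_add_mul_of_mem_orthogonal (hB : H.IsSubalgebra B) (hi : i ∈ Bᗮ)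
    (hii : ⟪i, i⟫ = 1) {a b : A} (ha : a ∈ B) (hb : b ∈ B) :
    ⟪a + b ⋆ i, a + b ⋆ i⟫ = ⟪a, a⟫ + ⟪b, b⟫ := by
  have h : ⟪b ⋆ i, a⟫ = 0 := by
    rw [inner_mul_eq_sub_inner_mul, B.inner_left_of_mem_orthogonal ha hi,
      B.inner_left_of_mem_orthogonal (hB.mul_mem hb ha) hi]
    ring
  rw [inner_add_left, inner_add_right, inner_add_right, real_inner_comm (b ⋆ i) a, h,
    inner_mul_mul_right, hii]
  ring

theorem add_mul_mul_add_mul_of_mem_orthogonal (hB : H.IsSubalgebra B) (hi : i ∈ Bᗮ)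
    (hii : ⟪i, i⟫ = 1) {a b c d : A} (ha : a ∈ B) (hb : b ∈ B) (hc : c ∈ B) (hd : d ∈ B) :
    (a + b ⋆ i) ⋆ (c + d ⋆ i) = (a ⋆ c - H.conj d ⋆ b) + (d ⋆ a + b ⋆ H.conj c) ⋆ i := by
  have hperp {x : A} (hx : x ∈ B) : ⟪i, x⟫ = 0 := B.inner_left_of_mem_orthogonal hx hi
  have hi1 := hperp hB.one_mem
  simp only [map_add, LinearMap.add_apply]
  rw [H.mul_mul_perp hi1 (hperp ha) (hperp hd) (hperp (hB.mul_mem hd ha)),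
    H.mul_perp_mul hi1 b (hperp hc),
    H.mul_perp_mul_mul_perp hi1 hii (hperp hb) (hperp hd) (hperp (hB.mul_mem hb hd))]
  abel

theorem mul_assoc_of_mem_orthogonal (hB : H.IsSubalgebra B) (hi : i ∈ Bᗮ) (hii : ⟪i, i⟫ = 1)
    {a b c : A} (ha : a ∈ B) (hb : b ∈ B) (hc : c ∈ B) : a ⋆ (b ⋆ c) = a ⋆ b ⋆ c := by
  have key : ∀ x ∈ B, ⟪x, a ⋆ (b ⋆ c) - a ⋆ b ⋆ c⟫ = 0 := by
    intro x hx
    have h := H.inner_mul_self (b + x ⋆ i) (c + a ⋆ i)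
    rw [add_mul_mul_add_mul_of_mem_orthogonal hB hi hii hb hx hc ha,
      inner_self_add_mul_of_mem_orthogonal hB hi hii
        (B.sub_mem (hB.mul_mem hb hc) (hB.mul_mem (hB.conj_mem ha) hx))
        (B.add_mem (hB.mul_mem ha hb) (hB.mul_mem hx (hB.conj_mem hc))),
      inner_self_add_mul_of_mem_orthogonal hB hi hii hb hx,
      inner_self_add_mul_of_mem_orthogonal hB hi hii hc ha,
      inner_self_mul_sub_conj_mul, inner_self_mul_add_mul_conj] at h
    rw [inner_sub_right]
    linarith
  have hmem : a ⋆ (b ⋆ c) - a ⋆ b ⋆ c ∈ B :=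
    B.sub_mem (hB.mul_mem ha (hB.mul_mem hb hc)) (hB.mul_mem (hB.mul_mem ha hb) hc)
  exact sub_eq_zero.mp (inner_self_eq_zero.mp (key _ hmem))

end Subalgebra

section Double

variable {K : Type*} [AddCommGroup K] [Module ℝ K]

def double (ψ : K →ₗ[ℝ] A) (i : A) : K × K →ₗ[ℝ] A := ψ.coprod (H.mul.flip i ∘ₗ ψ)

theorem double_apply (ψ : K →ₗ[ℝ] A) (i : A) (p : K × K) :
    H.double ψ i p = ψ p.1 + ψ p.2 ⋆ i := rfl

end Double

section Embedding

variable {K K' : Type*} [NonAssocRing K] [Star K] [Module ℝ K]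
  [NonAssocRing K'] [Star K'] [Module ℝ K']

structure IsStarEmbedding (ψ : K →ₗ[ℝ] A) : Prop where
  injective : Function.Injective ψ
  map_one : ψ 1 = H.one
  map_mul : ∀ x y, ψ (x * y) = ψ x ⋆ ψ y
  map_star : ∀ x, H.conj (ψ x) = ψ (star x)

theorem isStarEmbedding_toSpanSingleton :
    H.IsStarEmbedding (LinearMap.toSpanSingleton ℝ A H.one) where
  injective := smul_left_injective ℝ (norm_ne_zero_iff.mp (by simp [H.norm_one]))
  map_one := one_smul ℝ H.one
  map_mul x y := by simp [H.mul_one, smul_smul, mul_comm]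
  map_star x := by simp [conj_one]

variable {H} {ψ : K →ₗ[ℝ] A} {i : A}

theorem IsStarEmbedding.exists_linearEquiv (hψ : H.IsStarEmbedding ψ)
    (h : LinearMap.range ψ = ⊤) :
    ∃ φ : K ≃ₗ[ℝ] A, φ 1 = H.one ∧ ∀ x y, φ (x * y) = φ x ⋆ φ y :=
  ⟨.ofBijective ψ ⟨hψ.injective, LinearMap.range_eq_top.mp h⟩, hψ.map_one, hψ.map_mul⟩

theorem IsStarEmbedding.isSubalgebra_range (hψ : H.IsStarEmbedding ψ) :
    H.IsSubalgebra (LinearMap.range ψ) :=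
  H.isSubalgebra_range hψ.map_one hψ.map_mul

theorem double_one (hψ : H.IsStarEmbedding ψ) : H.double ψ i (1, 0) = H.one := by
  simp [double_apply, hψ.map_one]

theorem double_cayleyDicksonMul (hψ : H.IsStarEmbedding ψ) (hi : i ∈ (LinearMap.range ψ)ᗮ)
    (hii : ⟪i, i⟫ = 1) (p q : K × K) :
    H.double ψ i (cayleyDicksonMul p q) = H.double ψ i p ⋆ H.double ψ i q := by
  rw [double_apply, double_apply, double_apply,
    add_mul_mul_add_mul_of_mem_orthogonal hψ.isSubalgebra_range hi hii
      (LinearMap.mem_range_self ψ _) (LinearMap.mem_range_self ψ _)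
      (LinearMap.mem_range_self ψ _) (LinearMap.mem_range_self ψ _)]
  simp only [cayleyDicksonMul, map_sub, map_add, LinearMap.add_apply, hψ.map_mul, hψ.map_star]
  abel

theorem conj_double (hψ : H.IsStarEmbedding ψ) (hi : i ∈ (LinearMap.range ψ)ᗮ) (p : K × K) :
    H.conj (H.double ψ i p) = H.double ψ i (cayleyDicksonStar p) := by
  have hperp (x : K) : ⟪i, ψ x⟫ = 0 :=
    (LinearMap.range ψ).inner_left_of_mem_orthogonal (LinearMap.mem_range_self ψ x) hi
  rw [double_apply, double_apply, map_add, hψ.map_star,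
    H.conj_mul_eq_neg (hψ.map_one ▸ hperp 1) (hperp _)]
  simp [cayleyDicksonStar]

theorem double_injective (hψ : H.IsStarEmbedding ψ) (hi : i ∈ (LinearMap.range ψ)ᗮ)
    (hii : ⟪i, i⟫ = 1) : Function.Injective (H.double ψ i) := by
  refine (injective_iff_map_eq_zero _).mpr fun ⟨a, b⟩ h => ?_
  have h0 := inner_self_add_mul_of_mem_orthogonal hψ.isSubalgebra_range hi hii
    (LinearMap.mem_range_self ψ a) (LinearMap.mem_range_self ψ b)
  rw [show ψ a + ψ b ⋆ i = 0 from h, inner_zero_left] at h0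
  obtain ⟨ha, hb⟩ :=
    (add_eq_zero_iff_of_nonneg real_inner_self_nonneg real_inner_self_nonneg).mp h0.symm
  simp only [Prod.mk_eq_zero]
  exact ⟨(map_eq_zero_iff ψ hψ.injective).mp (inner_self_eq_zero.mp ha),
    (map_eq_zero_iff ψ hψ.injective).mp (inner_self_eq_zero.mp hb)⟩

theorem IsStarEmbedding.double_comp (hψ : H.IsStarEmbedding ψ)
    (hi : i ∈ (LinearMap.range ψ)ᗮ) (hii : ⟪i, i⟫ = 1) {f : K' →ₗ[ℝ] K × K}
    (hf : IsCayleyDicksonDouble f) : H.IsStarEmbedding (H.double ψ i ∘ₗ f) where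
  injective := (double_injective hψ hi hii).comp hf.injective
  map_one := by rw [LinearMap.comp_apply, hf.map_one, double_one hψ]
  map_mul x y := by
    simp only [LinearMap.comp_apply, hf.map_mul, double_cayleyDicksonMul hψ hi hii]
  map_star x := by simp only [LinearMap.comp_apply, conj_double hψ hi, hf.map_star]

variable [FiniteDimensional ℝ A]

theorem IsStarEmbedding.exists_of_isCayleyDicksonDouble (hψ : H.IsStarEmbedding ψ)
    (hr : LinearMap.range ψ ≠ ⊤) {f : K' →ₗ[ℝ] K × K} (hf : IsCayleyDicksonDouble f) :
    ∃ ψ' : K' →ₗ[ℝ] A, H.IsStarEmbedding ψ' := by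
  obtain ⟨i, hi, hii⟩ := Submodule.exists_inner_self_eq_one_mem_orthogonal hr
  exact ⟨_, hψ.double_comp hi hii hf⟩

theorem IsStarEmbedding.exists_linearEquiv_double (hψ : H.IsStarEmbedding ψ)
    (hr : LinearMap.range ψ ≠ ⊤) {a b : K} (hab : a * b ≠ b * a) :
    ∃ φ : (K × K) ≃ₗ[ℝ] A,
      φ (1, 0) = H.one ∧ ∀ p q, φ (cayleyDicksonMul p q) = φ p ⋆ φ q := by
  obtain ⟨i, hi, hii⟩ := Submodule.exists_inner_self_eq_one_mem_orthogonal hr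
  have hinj := double_injective hψ hi hii
  have hmul := double_cayleyDicksonMul hψ hi hii
  suffices htop : LinearMap.range (H.double ψ i) = ⊤ from
    ⟨.ofBijective _ ⟨hinj, LinearMap.range_eq_top.mp htop⟩, double_one hψ, hmul⟩
  by_contra hne
  obtain ⟨μ, hμ, hμμ⟩ := Submodule.exists_inner_self_eq_one_mem_orthogonal hne
  refine cayleyDicksonMul_not_assoc hab (hinj ?_)
  rw [hmul, hmul, hmul, hmul]
  exact mul_assoc_of_mem_orthogonal (H.isSubalgebra_range (double_one hψ) hmul) hμ hμμ
    (LinearMap.mem_range_self _ _) (LinearMap.mem_range_self _ _) (LinearMap.mem_range_self _ _)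

end Embedding

end HurwitzAlgebra

/-- Hurwitz's theorem (1898): a Euclidean Hurwitz algebra — a finite-dimensional real
inner product space `A`, nontrivial, with a (not necessarily associative) bilinear unital
multiplication `mul` with unit `e` whose norm is multiplicative — is isomorphic, as a
unital algebra, to `ℝ`, `ℂ`, the quaternions `ℍ`, or the octonions
`𝕆 = Quaternion ℝ × Quaternion ℝ` with the Cayley–Dickson product. -/
theorem hurwitz_classification
    (A : Type*) [NormedAddCommGroup A] [InnerProductSpace ℝ A]
    [FiniteDimensional ℝ A] [Nontrivial A]
    (mul : A →ₗ[ℝ] A →ₗ[ℝ] A) (e : A)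
    (h_one_mul : ∀ x, mul e x = x) (h_mul_one : ∀ x, mul x e = x)
    (hnorm : ∀ x y, ‖mul x y‖ = ‖x‖ * ‖y‖) :
    (∃ φ : ℝ ≃ₗ[ℝ] A, φ 1 = e ∧ ∀ x y : ℝ, φ (x * y) = mul (φ x) (φ y)) ∨
    (∃ φ : ℂ ≃ₗ[ℝ] A, φ 1 = e ∧ ∀ x y : ℂ, φ (x * y) = mul (φ x) (φ y)) ∨
    (∃ φ : Quaternion ℝ ≃ₗ[ℝ] A, φ 1 = e ∧
      ∀ x y : Quaternion ℝ, φ (x * y) = mul (φ x) (φ y)) ∨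
    (∃ φ : (Quaternion ℝ × Quaternion ℝ) ≃ₗ[ℝ] A,
      φ ((1 : Quaternion ℝ), (0 : Quaternion ℝ)) = e ∧
      ∀ x y : Quaternion ℝ × Quaternion ℝ, φ (octMul x y) = mul (φ x) (φ y)) := by
  let H : HurwitzAlgebra A :=
    ⟨mul, e, h_one_mul, h_mul_one, norm_eq_one_of_one_mul h_one_mul hnorm, hnorm⟩
  have h0 := H.isStarEmbedding_toSpanSingleton
  by_cases r0 : LinearMap.range (LinearMap.toSpanSingleton ℝ A e) = ⊤
  · exact Or.inl (h0.exists_linearEquiv r0)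
  obtain ⟨ψ1, h1⟩ := h0.exists_of_isCayleyDicksonDouble r0 isCayleyDicksonDouble_complex
  by_cases r1 : LinearMap.range ψ1 = ⊤
  · exact Or.inr (Or.inl (h1.exists_linearEquiv r1))
  obtain ⟨ψ2, h2⟩ := h1.exists_of_isCayleyDicksonDouble r1 isCayleyDicksonDouble_quaternion
  by_cases r2 : LinearMap.range ψ2 = ⊤
  · exact Or.inr (Or.inr (Or.inl (h2.exists_linearEquiv r2)))
  obtain ⟨a, b, hab⟩ := Quaternion.exists_mul_ne_mul
  exact Or.inr (Or.inr (Or.inr (h2.exists_linearEquiv_double r2 hab)))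
end
end

section
/- Zero divisors in a composition algebra are precisely the elements of norm zero: let A be a composition algebra over a field K of characteristic ≠ 2 with quadratic form Q, and let x ∈ A be nonzero. Then there exists a nonzero y ∈ A with x*y = 0 if and only if Q(x) = 0, and likewise there exists a nonzero y ∈ A with y*x = 0 if and only if Q(x) = 0. -/
/-!
If `Q (f y) = c * Q y` for an additive map `f`, then the polar form satisfies
`polar Q (f y) (f z) = c * polar Q y z`. For `c ≠ 0` this forces `ker f` into the radical of
`Q`, which is zero. For `c = 0` the image of `f` is totally isotropic; were `f` injective, it
would be surjective in finite dimension, making the whole space totally isotropic.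
Apply this to left and right multiplication by `x`, for which `c = Q x`.
-/

namespace QuadraticMap

variable {K M : Type*} [Field K] [AddCommGroup M] [Module K M] {Q : QuadraticForm K M}

theorem polar_map_of_map_eq_mul {f : M →+ M} {c : K} (hf : ∀ y, Q (f y) = c * Q y) (y z : M) :
    polar Q (f y) (f z) = c * polar Q y z := by
  simp only [polar, ← map_add, hf]
  ring

theorem eq_zero_of_map_eq_zero_of_map_eq_mul (hQ : (polarBilin Q).SeparatingLeft)
    {f : M →+ M} {c : K} (hf : ∀ y, Q (f y) = c * Q y) (hc : c ≠ 0) {y : M} (hy : f y = 0) :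
    y = 0 := by
  refine hQ y fun z => ?_
  have h := polar_map_of_map_eq_mul hf y z
  rw [hy, polar_zero_left] at h
  exact (mul_eq_zero.mp h.symm).resolve_left hc

theorem exists_ne_zero_map_eq_zero_of_isotropic [FiniteDimensional K M] [Nontrivial M]
    (hQ : (polarBilin Q).SeparatingLeft) {f : M →ₗ[K] M} (hf : ∀ y, Q (f y) = 0) :
    ∃ y, y ≠ 0 ∧ f y = 0 := by
  by_contra! hker
  have hsurj : Function.Surjective f :=
    LinearMap.injective_iff_surjective.mp <| (injective_iff_map_eq_zero f).mpr fun y hy =>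
      not_not.mp fun hy0 => hker y hy0 hy
  obtain ⟨a, ha⟩ := exists_ne (0 : M)
  refine ha (hQ a fun b => ?_)
  obtain ⟨y, rfl⟩ := hsurj a
  obtain ⟨z, rfl⟩ := hsurj b
  simp only [polarBilin_apply_apply, polar, ← map_add, hf, sub_zero]

theorem exists_ne_zero_map_eq_zero_iff [FiniteDimensional K M] [Nontrivial M]
    (hQ : (polarBilin Q).SeparatingLeft) {f : M →ₗ[K] M} {c : K}
    (hf : ∀ y, Q (f y) = c * Q y) :
    (∃ y, y ≠ 0 ∧ f y = 0) ↔ c = 0 := by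
  refine ⟨fun ⟨y, hy, hfy⟩ => ?_, fun hc => ?_⟩
  · by_contra hc
    exact hy (eq_zero_of_map_eq_zero_of_map_eq_mul hQ (f := f.toAddMonoidHom) hf hc hfy)
  · exact exists_ne_zero_map_eq_zero_of_isotropic hQ fun y => by rw [hf, hc, zero_mul]

end QuadraticMap

theorem zero_divisors_iff_norm_zero_general
    (K : Type*) [Field K]
    (A : Type*) [NonAssocRing A] [Module K A] [IsScalarTower K A A] [SMulCommClass K A A]
    [Nontrivial A] [FiniteDimensional K A]
    (Q : QuadraticForm K A)
    (hmul : ∀ x y : A, Q (x * y) = Q x * Q y)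
    (hnd : ∀ x : A, (∀ y : A, (Q (x + y) - Q x - Q y) / 2 = 0) → x = 0)
    (x : A) :
    ((∃ y : A, y ≠ 0 ∧ x * y = 0) ↔ Q x = 0) ∧
    ((∃ y : A, y ≠ 0 ∧ y * x = 0) ↔ Q x = 0) := by
  have hQ : (QuadraticMap.polarBilin Q).SeparatingLeft := fun u hu =>
    hnd u fun v => by rw [← QuadraticMap.polar, ← QuadraticMap.polarBilin_apply_apply, hu, zero_div]
  exact ⟨QuadraticMap.exists_ne_zero_map_eq_zero_iff hQ (f := LinearMap.mulLeft K x) (hmul x),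
    QuadraticMap.exists_ne_zero_map_eq_zero_iff hQ (f := LinearMap.mulRight K x)
      fun y => (hmul y x).trans (mul_comm _ _)⟩

/-- Zero divisors in a composition algebra are precisely the elements of norm zero:
for a nonzero `x`, there is a nonzero `y` with `x * y = 0` iff `Q x = 0`, and likewise
there is a nonzero `y` with `y * x = 0` iff `Q x = 0`. -/
theorem zero_divisors_iff_norm_zero
    (K : Type*) [Field K] (h2 : (2 : K) ≠ 0)
    (A : Type*) [NonAssocRing A] [Module K A] [IsScalarTower K A A] [SMulCommClass K A A]
    [Nontrivial A] [FiniteDimensional K A]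
    (Q : QuadraticForm K A)
    (hmul : ∀ x y : A, Q (x * y) = Q x * Q y)
    (hnd : ∀ x : A, (∀ y : A, (Q (x + y) - Q x - Q y) / 2 = 0) → x = 0)
    (x : A) (hx : x ≠ 0) :
    ((∃ y : A, y ≠ 0 ∧ x * y = 0) ↔ Q x = 0) ∧
    ((∃ y : A, y ≠ 0 ∧ y * x = 0) ↔ Q x = 0) :=
  zero_divisors_iff_norm_zero_general K A Q hmul hnd x
end

section
/- Kernel of left multiplication by an imaginary zero divisor: let A be a composition algebra over a field K of characteristic ≠ 2, with quadratic form Q, bilinear form B and imaginary part Im A = {y ∈ A | B(y,1) = 0}. Let x ∈ Im A be nonzero with Q(x) = 0, and set K_x := {y ∈ Im A | x*y = 0}. Then x ∈ K_x; Q(y) = 0 for every y ∈ K_x; K_x = {x*z | z ∈ A} ∩ Im A; and the K-subspace K_x has dimension (Module.finrank K A)/2 − 1. -/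
/-!
Write `B` for the polar form of `Q`. Multiplicativity gives `B (a b) (a c) = Q a · B b c`, and
linearizing in `a` at `1` gives `B (a b) c + B b (a c) = 2 B a 1 · B b c`. For imaginary `x` the
left multiplication `L_x` is therefore skew-adjoint, and if moreover `Q x = 0` then
`B (x (x y)) w = -Q x · B y w = 0`, so `L_x² = 0`, i.e. `range L_x ≤ ker L_x`. On the other hand
`B (x y) (z y) = B x z · Q y` shows that `x y = 0` with `x ≠ 0` forces `Q y = 0`: `ker L_x` is
totally isotropic, hence of dimension at most `n / 2`. Rank–nullity then gives
`range L_x = ker L_x` of dimension `n / 2`. Finally `B (x z) 1 = -B z x`, so `B (·) 1` does not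
vanish on `ker L_x = x A`, and cutting with `Im A` drops the dimension by one.
-/

open Module LinearMap QuadraticMap
open LinearMap (BilinForm)

section LinearAlgebra

variable {K V : Type*} [Field K] [AddCommGroup V] [Module K V] [FiniteDimensional K V]

theorem LinearMap.BilinForm.two_mul_finrank_le_of_le_orthogonal {B : BilinForm K V}
    (hB : B.Nondegenerate) {W : Submodule K V} (hW : W ≤ B.orthogonal W) :
    2 * finrank K W ≤ finrank K V := by
  have := Submodule.finrank_mono hW
  rw [finrank_orthogonal hB] at this
  have := W.finrank_le
  omega

theorem LinearMap.range_eq_ker_of_range_le_ker {f : V →ₗ[K] V} (hf : range f ≤ ker f)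
    (h : 2 * finrank K (ker f) ≤ finrank K V) : range f = ker f :=
  Submodule.eq_of_le_of_finrank_le hf (by have := f.finrank_range_add_finrank_ker; omega)

theorem Module.Dual.finrank_inf_ker_add_one {f : Dual K V} {W : Submodule K V}
    (hW : ¬W ≤ ker f) : finrank K (W ⊓ ker f : Submodule K V) + 1 = finrank K W := by
  have hf : f.comp W.subtype ≠ 0 := fun h0 =>
    hW fun y hy => by simpa using LinearMap.congr_fun h0 ⟨y, hy⟩
  rw [← Submodule.map_comap_subtype, Submodule.finrank_map_subtype_eq, ← ker_comp]
  exact Module.Dual.finrank_ker_add_one_of_ne_zero hf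

end LinearAlgebra

namespace QuadraticMap

section Ring

variable {R A : Type*} [CommRing R] [NonAssocRing A] [Module R A] {Q : QuadraticForm R A}

/-- `Im A`: as `polar Q = 2 B`, this is `{y | B y 1 = 0}`. -/
def imaginaryPart (Q : QuadraticForm R A) : Submodule R A :=
  ker ((polarBilin Q).flip 1)

theorem mem_imaginaryPart {y : A} : y ∈ imaginaryPart Q ↔ polar Q y 1 = 0 :=
  Iff.rfl

theorem polar_mul_mul_left (hmul : ∀ x y : A, Q (x * y) = Q x * Q y) (a b c : A) :
    polar Q (a * b) (a * c) = Q a * polar Q b c := by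
  simp only [polar, ← mul_add, hmul]
  ring

theorem polar_mul_mul_right (hmul : ∀ x y : A, Q (x * y) = Q x * Q y) (a b c : A) :
    polar Q (a * c) (b * c) = polar Q a b * Q c := by
  simp only [polar, ← add_mul, hmul]
  ring

theorem polar_mul_left_add_polar_mul_right (hmul : ∀ x y : A, Q (x * y) = Q x * Q y)
    (hQ1 : Q 1 = 1) (a b c : A) :
    polar Q (a * b) c + polar Q b (a * c) = polar Q a 1 * polar Q b c := by
  have h := polar_mul_mul_left hmul (a + 1) b c
  have hQa1 : Q (a + 1) = Q a + 1 + polar Q a 1 := by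
    rw [polar, hQ1]
    ring
  rw [add_mul, add_mul, one_mul, one_mul, polar_add_left, polar_add_right, polar_add_right,
    polar_mul_mul_left hmul, hQa1] at h
  linear_combination h

theorem polar_mul_left_eq_neg (hmul : ∀ x y : A, Q (x * y) = Q x * Q y) (hQ1 : Q 1 = 1)
    {x : A} (hx1 : polar Q x 1 = 0) (b c : A) :
    polar Q (x * b) c = -polar Q b (x * c) := by
  have h := polar_mul_left_add_polar_mul_right hmul hQ1 x b c
  rw [hx1, zero_mul] at h
  linear_combination h

theorem mul_mul_eq_zero (hmul : ∀ x y : A, Q (x * y) = Q x * Q y) (hQ1 : Q 1 = 1)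
    (hsep : (polarBilin Q).SeparatingLeft) {x : A} (hQx : Q x = 0) (hx1 : polar Q x 1 = 0)
    (y : A) : x * (x * y) = 0 :=
  hsep _ fun w => by
    rw [polarBilin_apply_apply, polar_mul_left_eq_neg hmul hQ1 hx1, polar_mul_mul_left hmul, hQx,
      zero_mul, neg_zero]

theorem exists_polar_mul_one_ne_zero (hmul : ∀ x y : A, Q (x * y) = Q x * Q y) (hQ1 : Q 1 = 1)
    (hsep : (polarBilin Q).SeparatingLeft) {x : A} (hx : x ≠ 0) (hx1 : polar Q x 1 = 0) :
    ∃ z, polar Q (x * z) 1 ≠ 0 := by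
  by_contra! h
  refine hx (hsep x fun z => ?_)
  have hz := polar_mul_left_eq_neg hmul hQ1 hx1 z 1
  rw [h, mul_one] at hz
  rw [polarBilin_apply_apply, polar_comm]
  linear_combination hz

theorem le_orthogonal_self_of_forall_map_eq_zero {W : Submodule R A} (hW : ∀ y ∈ W, Q y = 0) :
    W ≤ BilinForm.orthogonal (polarBilin Q) W := fun y hy =>
  BilinForm.mem_orthogonal_iff.2 fun z hz => by
    rw [polarBilin_apply_apply, polar, hW _ (W.add_mem hz hy), hW z hz, hW y hy, sub_zero, sub_zero]

section Domain

variable [NoZeroDivisors R]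

theorem map_one_eq_one [Nontrivial A] (hmul : ∀ x y : A, Q (x * y) = Q x * Q y)
    (hsep : (polarBilin Q).SeparatingLeft) : Q 1 = 1 := by
  have h11 : Q 1 * (Q 1 - 1) = 0 := by
    have h := hmul 1 1
    rw [one_mul] at h
    linear_combination -h
  refine sub_eq_zero.1 <|
    (mul_eq_zero.1 h11).resolve_left fun h0 => one_ne_zero (hsep 1 fun y => ?_)
  have hQ : ∀ z : A, Q z = 0 := fun z => by rw [← one_mul z, hmul, h0, zero_mul]
  rw [polarBilin_apply_apply, polar, hQ, hQ, hQ, sub_zero, sub_zero]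

theorem map_eq_zero_of_mul_eq_zero (hmul : ∀ x y : A, Q (x * y) = Q x * Q y)
    (hsep : (polarBilin Q).SeparatingLeft) {x y : A} (hx : x ≠ 0) (hxy : x * y = 0) :
    Q y = 0 := by
  by_contra hQy
  refine hx (hsep x fun z => ?_)
  have h := polar_mul_mul_right hmul x z y
  rw [hxy, polar_zero_left] at h
  exact (mul_eq_zero.1 h.symm).resolve_right hQy

end Domain

end Ring

theorem range_mulLeft_eq_ker {K A : Type*} [Field K] [NonAssocRing A] [Module K A]
    [SMulCommClass K A A] [Nontrivial A] [FiniteDimensional K A] {Q : QuadraticForm K A}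
    (hmul : ∀ x y : A, Q (x * y) = Q x * Q y) (hsep : (polarBilin Q).SeparatingLeft) {x : A}
    (hx : x ≠ 0) (hQx : Q x = 0) (hx1 : polar Q x 1 = 0) :
    range (mulLeft K x) = ker (mulLeft K x) := by
  have hnd : (polarBilin Q).Nondegenerate :=
    (IsRefl.nondegenerate_iff_separatingLeft fun a b h => by
      rwa [polarBilin_apply_apply, polar_comm] at h).2 hsep
  have hiso : ker (mulLeft K x) ≤ BilinForm.orthogonal (polarBilin Q) (ker (mulLeft K x)) :=
    le_orthogonal_self_of_forall_map_eq_zero fun y hy => map_eq_zero_of_mul_eq_zero hmul hsep hx hy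
  refine range_eq_ker_of_range_le_ker ?_ (BilinForm.two_mul_finrank_le_of_le_orthogonal hnd hiso)
  rintro _ ⟨y, rfl⟩
  exact mul_mul_eq_zero hmul (map_one_eq_one hmul hsep) hsep hQx hx1 y

end QuadraticMap

theorem ker_leftMul_imaginary_zero_divisor_general
    (K : Type*) [Field K] (h2 : (2 : K) ≠ 0)
    (A : Type*) [NonAssocRing A] [Module K A] [SMulCommClass K A A]
    [Nontrivial A] [FiniteDimensional K A]
    (Q : QuadraticForm K A)
    (hmul : ∀ x y : A, Q (x * y) = Q x * Q y)
    (hnd : ∀ x : A, (∀ y : A, (Q (x + y) - Q x - Q y) / 2 = 0) → x = 0)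
    (x : A) (hx : x ≠ 0) (hQx : Q x = 0)
    (hxIm : (Q (x + 1) - Q x - Q 1) / 2 = 0) :
    x ∈ {y : A | (Q (y + 1) - Q y - Q 1) / 2 = 0 ∧ x * y = 0} ∧
    (∀ y ∈ {y : A | (Q (y + 1) - Q y - Q 1) / 2 = 0 ∧ x * y = 0}, Q y = 0) ∧
    {y : A | (Q (y + 1) - Q y - Q 1) / 2 = 0 ∧ x * y = 0} =
      {w : A | ∃ z : A, w = x * z} ∩ {y : A | (Q (y + 1) - Q y - Q 1) / 2 = 0} ∧
    Set.finrank K {y : A | (Q (y + 1) - Q y - Q 1) / 2 = 0 ∧ x * y = 0} =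
      Module.finrank K A / 2 - 1 := by
  have hhalf (a b : A) : (Q (a + b) - Q a - Q b) / 2 = 0 ↔ polar Q a b = 0 :=
    div_eq_zero_iff.trans (or_iff_left h2)
  have hsep : (polarBilin Q).SeparatingLeft := fun a ha => hnd a fun y => (hhalf a y).2 (ha y)
  have hQ1 := map_one_eq_one hmul hsep
  have hx1 := (hhalf x 1).1 hxIm
  have hrange := range_mulLeft_eq_ker (K := K) hmul hsep hx hQx hx1
  have hKx : {y : A | (Q (y + 1) - Q y - Q 1) / 2 = 0 ∧ x * y = 0} =
      ↑(ker (mulLeft K x) ⊓ imaginaryPart Q) := by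
    ext y
    simp [hhalf, mem_imaginaryPart, and_comm]
  refine ⟨⟨hxIm, by simpa using mul_mul_eq_zero hmul hQ1 hsep hQx hx1 1⟩,
    fun y hy => map_eq_zero_of_mul_eq_zero hmul hsep hx hy.2, ?_, ?_⟩
  · rw [hKx, ← hrange]
    ext y
    simp [hhalf, mem_imaginaryPart, eq_comm]
  · have hnot : ¬ker (mulLeft K x) ≤ imaginaryPart Q := fun h =>
      have ⟨z, hz⟩ := exists_polar_mul_one_ne_zero hmul hQ1 hsep hx hx1
      hz (h (hrange ▸ mem_range_self _ z))
    have hcut : finrank K (ker (mulLeft K x) ⊓ imaginaryPart Q : Submodule K A) + 1 =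
        finrank K (ker (mulLeft K x)) := Dual.finrank_inf_ker_add_one hnot
    have hrank := (mulLeft K x).finrank_range_add_finrank_ker
    rw [hrange] at hrank
    rw [Set.finrank, hKx, Submodule.span_eq]
    omega

/-- Kernel of left multiplication by an imaginary zero divisor `x` in a composition algebra:
`K_x = {y ∈ Im A | x * y = 0}` contains `x`, is isotropic, equals `x·A ∩ Im A`, and has
dimension `(dim A) / 2 - 1`.  Here `Im A = {y | B y 1 = 0}` with
`B y z = (Q (y + z) - Q y - Q z) / 2`. -/
theorem ker_leftMul_imaginary_zero_divisor
    (K : Type*) [Field K] (h2 : (2 : K) ≠ 0)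
    (A : Type*) [NonAssocRing A] [Module K A] [IsScalarTower K A A] [SMulCommClass K A A]
    [Nontrivial A] [FiniteDimensional K A]
    (Q : QuadraticForm K A)
    (hmul : ∀ x y : A, Q (x * y) = Q x * Q y)
    (hnd : ∀ x : A, (∀ y : A, (Q (x + y) - Q x - Q y) / 2 = 0) → x = 0)
    (x : A) (hx : x ≠ 0) (hQx : Q x = 0)
    (hxIm : (Q (x + 1) - Q x - Q 1) / 2 = 0) :
    x ∈ {y : A | (Q (y + 1) - Q y - Q 1) / 2 = 0 ∧ x * y = 0} ∧
    (∀ y ∈ {y : A | (Q (y + 1) - Q y - Q 1) / 2 = 0 ∧ x * y = 0}, Q y = 0) ∧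
    {y : A | (Q (y + 1) - Q y - Q 1) / 2 = 0 ∧ x * y = 0} =
      {w : A | ∃ z : A, w = x * z} ∩ {y : A | (Q (y + 1) - Q y - Q 1) / 2 = 0} ∧
    Set.finrank K {y : A | (Q (y + 1) - Q y - Q 1) / 2 = 0 ∧ x * y = 0} =
      Module.finrank K A / 2 - 1 :=
  ker_leftMul_imaginary_zero_divisor_general K h2 A Q hmul hnd x hx hQx hxIm
end

section
/- Normed algebra from a cross product: let (V, ⟪·,·⟫) be a real inner product space equipped with a vector cross product ×. On A = ℝ × V define the product (s,u)·(t,v) := (s·t − ⟪u,v⟫, s • v + t • u + u × v) and the quadratic norm N(s,u) := s² + ‖u‖². Then N is multiplicative: N((s,u)·(t,v)) = N(s,u)·N(t,v) for all s, t ∈ ℝ and u, v ∈ V. -/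
/-! Since `u × v` is orthogonal to `u` and `v`, Pythagoras splits `‖s • v + t • u + u × v‖²` into
`‖s • v + t • u‖² + ‖u × v‖²`; the magnitude condition turns the last term into
`‖u‖²‖v‖² - ⟪u, v⟫²`, after which the identity is polynomial in `s`, `t`, `‖u‖²`, `‖v‖²`, `⟪u, v⟫`. -/

noncomputable section

open RealInnerProductSpace

theorem norm_smul_add_smul_sq_real {V : Type*} [NormedAddCommGroup V] [InnerProductSpace ℝ V]
    (s t : ℝ) (u v : V) :
    ‖s • v + t • u‖ ^ 2 = s ^ 2 * ‖v‖ ^ 2 + 2 * (s * t) * ⟪u, v⟫ + t ^ 2 * ‖u‖ ^ 2 := by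
  rw [norm_add_sq_real, norm_smul, norm_smul, real_inner_smul_left, real_inner_smul_right,
    real_inner_comm, Real.norm_eq_abs, Real.norm_eq_abs, mul_pow, mul_pow, sq_abs, sq_abs]
  ring

theorem norm_smul_add_smul_add_sq_of_inner_eq_zero {V : Type*} [NormedAddCommGroup V]
    [InnerProductSpace ℝ V] {u v w : V} (hu : ⟪w, u⟫ = 0) (hv : ⟪w, v⟫ = 0) (s t : ℝ) :
    ‖s • v + t • u + w‖ ^ 2 = ‖s • v + t • u‖ ^ 2 + ‖w‖ ^ 2 := by
  have horth : ⟪w, s • v + t • u⟫ = 0 := by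
    rw [inner_add_right, real_inner_smul_right, real_inner_smul_right, hu, hv]
    ring
  rw [norm_add_sq_real, real_inner_comm, horth]
  ring

/-- Normed algebra from a cross product: if `(V, ⟪·,·⟫)` is a real inner product space with
a vector cross product `×` (bilinear, with `(u,v,w) ↦ ⟪u × v, w⟫` alternating and
`‖u × v‖² = ‖u‖²‖v‖² - ⟪u,v⟫²`), then the quadratic norm `N (s, u) = s² + ‖u‖²` on
`ℝ × V` is multiplicative for the product
`(s,u)·(t,v) = (s t - ⟪u,v⟫, s • v + t • u + u × v)`. -/
theorem normed_algebra_from_cross_product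
    (V : Type*) [NormedAddCommGroup V] [InnerProductSpace ℝ V]
    (cross : V →ₗ[ℝ] V →ₗ[ℝ] V)
    (halt : ∀ u v : V, ⟪cross u u, v⟫ = 0 ∧ ⟪cross u v, u⟫ = 0 ∧ ⟪cross u v, v⟫ = 0)
    (hmag : ∀ u v : V, ‖cross u v‖ ^ 2 = ‖u‖ ^ 2 * ‖v‖ ^ 2 - ⟪u, v⟫ ^ 2) :
    ∀ (s t : ℝ) (u v : V),
      (s * t - ⟪u, v⟫) ^ 2 + ‖s • v + t • u + cross u v‖ ^ 2 =
        (s ^ 2 + ‖u‖ ^ 2) * (t ^ 2 + ‖v‖ ^ 2) := by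
  intro s t u v
  obtain ⟨-, hu, hv⟩ := halt u v
  rw [norm_smul_add_smul_add_sq_of_inner_eq_zero hu hv, norm_smul_add_smul_sq_real, hmag]
  ring
end
end

section
/- The automorphism group of the complexified quaternions is SO₃(ℂ): there is a group isomorphism between the group of ℂ-algebra automorphisms of Quaternion ℂ and the special orthogonal group of 3×3 complex matrices, i.e. (Quaternion ℂ ≃ₐ[ℂ] Quaternion ℂ) ≃* Matrix.specialOrthogonalGroup (Fin 3) ℂ. -/
/-!
Write a quaternion as a scalar plus a vector of `R³`. Then
`(a + v) (b + w) = (a b - v ⬝ w) + (a w + b v + v × w)`, so letting a matrix `A` act on the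
vector part is an algebra endomorphism exactly when `A` preserves dot and cross products, that
is, when `A ∈ SO₃(R)`. Conversely, every automorphism `f` has this form: it fixes the scalars,
and it maps vectors to vectors, because the square of a vector `x` is a scalar, so `f x` has a
scalar square, and when `2` is not a zero divisor a quaternion with scalar square is a scalar or
a vector.
-/

noncomputable section

/-- The special orthogonal group of 3×3 complex matrices: matrices `g` with
`gᵀ * g = 1` and `det g = 1`, as a submonoid of the matrix ring. -/
def SO3C : Submonoid (Matrix (Fin 3) (Fin 3) ℂ) where
  carrier := {g | g.transpose * g = 1 ∧ g.det = 1}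
  mul_mem' := fun {a b} ha hb =>
    ⟨by rw [Matrix.transpose_mul, mul_assoc, ← mul_assoc a.transpose, ha.1, one_mul, hb.1],
     by rw [Matrix.det_mul, ha.2, hb.2, one_mul]⟩
  one_mem' := ⟨by rw [Matrix.transpose_one, one_mul], Matrix.det_one⟩

open Matrix Quaternion

namespace Matrix

variable {R : Type*} [CommRing R]

theorem cross_mulVec_mulVec (A : Matrix (Fin 3) (Fin 3) R) (v w : Fin 3 → R) :
    (A *ᵥ v) ⨯₃ (A *ᵥ w) = A.adjugateᵀ *ᵥ (v ⨯₃ w) := by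
  ext i
  fin_cases i <;>
    simp [cross_apply, adjugate_fin_three, mulVec, dotProduct, Fin.sum_univ_three] <;> ring

theorem mem_specialOrthogonalGroup_fin_three_iff_dotProduct_cross
    {A : Matrix (Fin 3) (Fin 3) R} :
    A ∈ specialOrthogonalGroup (Fin 3) R ↔
      ∀ v w, (A *ᵥ v) ⬝ᵥ (A *ᵥ w) = v ⬝ᵥ w ∧ A *ᵥ (v ⨯₃ w) = (A *ᵥ v) ⨯₃ (A *ᵥ w) := by
  rw [mem_specialOrthogonalGroup_iff, mem_orthogonalGroup_iff']
  constructor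
  · rintro ⟨hA, hdet⟩ v w
    have hadj : A.adjugate = Aᵀ := by
      rw [← inv_eq_left_inv hA, inv_def, hdet, Ring.inverse_one, one_smul]
    refine ⟨?_, ?_⟩
    · rw [dotProduct_mulVec, ← mulVec_transpose, mulVec_mulVec, hA, one_mulVec]
    · rw [cross_mulVec_mulVec, hadj, transpose_transpose]
  · intro h
    have hcol (i j : Fin 3) :
        (Aᵀ * A) i j = (A *ᵥ Pi.single i 1) ⬝ᵥ (A *ᵥ Pi.single j 1) := by
      simp [mul_apply, dotProduct]
    refine ⟨?_, ?_⟩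
    · ext i j
      rw [hcol, (h _ _).1]
      simp [one_apply, Pi.single_apply, eq_comm]
    · have hcross : (Pi.single 1 1 : Fin 3 → R) ⨯₃ Pi.single 2 1 = Pi.single 0 1 := by
        ext i; fin_cases i <;> simp [cross_apply]
      have hrows : Aᵀ = ![A *ᵥ Pi.single 0 1, A *ᵥ Pi.single 1 1, A *ᵥ Pi.single 2 1] := by
        ext i j; fin_cases i <;> simp
      rw [← det_transpose, hrows, ← triple_product_eq_det, ← (h _ _).2, hcross, (h _ _).1]
      simp

end Matrix

namespace Quaternion

variable {R : Type*} [CommRing R]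

def imVec : ℍ[R] →ₗ[R] Fin 3 → R where
  toFun x := ![x.imI, x.imJ, x.imK]
  map_add' x y := by ext i; fin_cases i <;> simp
  map_smul' r x := by ext i; fin_cases i <;> simp

def ofVec : (Fin 3 → R) →ₗ[R] ℍ[R] where
  toFun v := ⟨0, v 0, v 1, v 2⟩
  map_add' _ _ := QuaternionAlgebra.ext (add_zero 0).symm rfl rfl rfl
  map_smul' r _ := QuaternionAlgebra.ext (mul_zero r).symm rfl rfl rfl

@[simp] theorem re_ofVec (v : Fin 3 → R) : (ofVec v).re = 0 := rfl

@[simp] theorem imVec_ofVec (v : Fin 3 → R) : imVec (ofVec v) = v := by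
  ext i; fin_cases i <;> rfl

@[simp] theorem imVec_coe (r : R) : imVec (r : ℍ[R]) = 0 := by
  ext i; fin_cases i <;> rfl

theorem coe_re_add_ofVec_imVec (x : ℍ[R]) : ↑x.re + ofVec (imVec x) = x :=
  x.re_add_im

theorem eq_coe_re_of_imVec_eq_zero {x : ℍ[R]} (h : imVec x = 0) : x = ↑x.re := by
  rw [← coe_re_add_ofVec_imVec x, h, map_zero, add_zero, re_coe]

theorem ext_re_imVec {x y : ℍ[R]} (hre : x.re = y.re) (him : imVec x = imVec y) : x = y := by
  rw [← coe_re_add_ofVec_imVec x, ← coe_re_add_ofVec_imVec y, hre, him]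

theorem re_mul_eq_sub_dotProduct (x y : ℍ[R]) :
    (x * y).re = x.re * y.re - imVec x ⬝ᵥ imVec y := by
  simp [imVec, dotProduct, Fin.sum_univ_three]; ring

theorem imVec_mul (x y : ℍ[R]) :
    imVec (x * y) = x.re • imVec y + y.re • imVec x + imVec x ⨯₃ imVec y := by
  ext i; fin_cases i <;> simp [imVec, cross_apply] <;> ring

theorem map_coe (f : ℍ[R] ≃ₐ[R] ℍ[R]) (r : R) : f r = r := by
  simpa only [algebraMap_def] using f.commutes r

def mapIm (A : Matrix (Fin 3) (Fin 3) R) : ℍ[R] →ₗ[R] ℍ[R] where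
  toFun x := ↑x.re + ofVec (A *ᵥ imVec x)
  map_add' x y := by simp only [re_add, coe_add, map_add, mulVec_add]; abel
  map_smul' r x := by simp [mulVec_smul, smul_add, smul_coe]

@[simp] theorem re_mapIm (A : Matrix (Fin 3) (Fin 3) R) (x : ℍ[R]) :
    (mapIm A x).re = x.re := by
  simp [mapIm]

@[simp] theorem imVec_mapIm (A : Matrix (Fin 3) (Fin 3) R) (x : ℍ[R]) :
    imVec (mapIm A x) = A *ᵥ imVec x := by
  simp [mapIm]

theorem mapIm_coe (A : Matrix (Fin 3) (Fin 3) R) (r : R) : mapIm A r = r :=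
  ext_re_imVec (by simp) (by simp)

theorem mapIm_one : mapIm (1 : Matrix (Fin 3) (Fin 3) R) = 1 :=
  LinearMap.ext fun _ => ext_re_imVec (by simp) (by simp)

theorem mapIm_mul (A B : Matrix (Fin 3) (Fin 3) R) : mapIm (A * B) = mapIm A * mapIm B :=
  LinearMap.ext fun _ => ext_re_imVec (by simp) (by simp [mulVec_mulVec])

theorem mapIm_injective : Function.Injective (mapIm (R := R)) := by
  intro A B h
  refine ext_of_mulVec_single fun i => ?_
  simpa using congrArg (fun f => imVec (f (ofVec (Pi.single i 1)))) h

theorem mapIm_map_mul_iff {A : Matrix (Fin 3) (Fin 3) R} :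
    (∀ x y, mapIm A (x * y) = mapIm A x * mapIm A y) ↔
      ∀ v w, (A *ᵥ v) ⬝ᵥ (A *ᵥ w) = v ⬝ᵥ w ∧ A *ᵥ (v ⨯₃ w) = (A *ᵥ v) ⨯₃ (A *ᵥ w) := by
  constructor
  · intro h v w
    have hvw := h (ofVec v) (ofVec w)
    have hre := congrArg QuaternionAlgebra.re hvw
    have him := congrArg imVec hvw
    simp only [re_mapIm, imVec_mapIm, re_mul_eq_sub_dotProduct, imVec_mul, re_ofVec,
      imVec_ofVec, zero_smul, zero_add, zero_mul, zero_sub, neg_inj] at hre him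
    exact ⟨hre.symm, him⟩
  · intro h x y
    apply ext_re_imVec
    · simp only [re_mapIm, imVec_mapIm, re_mul_eq_sub_dotProduct, (h _ _).1]
    · simp only [re_mapIm, imVec_mapIm, imVec_mul, mulVec_add, mulVec_smul, (h _ _).2]

def mapImAlgHom {A : Matrix (Fin 3) (Fin 3) R} (hA : A ∈ specialOrthogonalGroup (Fin 3) R) :
    ℍ[R] →ₐ[R] ℍ[R] :=
  AlgHom.ofLinearMap (mapIm A) (mapIm_coe A 1) <|
    mapIm_map_mul_iff.mpr <| mem_specialOrthogonalGroup_fin_three_iff_dotProduct_cross.mp hA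

@[simp] theorem toLinearMap_mapImAlgHom {A : Matrix (Fin 3) (Fin 3) R}
    (hA : A ∈ specialOrthogonalGroup (Fin 3) R) : (mapImAlgHom hA).toLinearMap = mapIm A :=
  rfl

def mapImHom : specialOrthogonalGroup (Fin 3) R →* (ℍ[R] →ₐ[R] ℍ[R]) where
  toFun A := mapImAlgHom A.2
  map_one' := AlgHom.toLinearMap_injective <| by
    rw [toLinearMap_mapImAlgHom, OneMemClass.coe_one, mapIm_one]; rfl
  map_mul' A B := AlgHom.toLinearMap_injective <| by
    rw [toLinearMap_mapImAlgHom, Submonoid.coe_mul, mapIm_mul]; rfl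

def mapImAut : specialOrthogonalGroup (Fin 3) R →* (ℍ[R] ≃ₐ[R] ℍ[R]) :=
  (AlgEquiv.algHomUnitsEquiv R ℍ[R]).toMonoidHom.comp (mapImHom (R := R)).toHomUnits

theorem mapImAut_apply (A : specialOrthogonalGroup (Fin 3) R) (x : ℍ[R]) :
    mapImAut A x = mapIm A x := rfl

theorem mapImAut_injective : Function.Injective (mapImAut (R := R)) := fun A B h =>
  Subtype.ext <| mapIm_injective <| LinearMap.ext fun x => by
    simpa [mapImAut_apply] using DFunLike.congr_fun h x

theorem map_eq_coe_re_add_map_ofVec_imVec (f : ℍ[R] ≃ₐ[R] ℍ[R]) (x : ℍ[R]) :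
    f x = ↑x.re + f (ofVec (imVec x)) := by
  conv_lhs => rw [← coe_re_add_ofVec_imVec x]
  rw [map_add, map_coe]

def imMatrix (f : ℍ[R] ≃ₐ[R] ℍ[R]) : Matrix (Fin 3) (Fin 3) R :=
  LinearMap.toMatrix' (imVec ∘ₗ f.toLinearMap ∘ₗ ofVec)

section NoZeroDivisors

variable [NoZeroDivisors R] [NeZero (2 : R)]

theorem re_eq_zero_of_imVec_mul_self_eq_zero {x : ℍ[R]} (h : imVec (x * x) = 0)
    (hx : imVec x ≠ 0) : x.re = 0 := by
  rw [imVec_mul, cross_self, add_zero, ← add_smul, ← two_mul, smul_eq_zero] at h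
  exact (mul_eq_zero.mp (h.resolve_right hx)).resolve_left two_ne_zero

theorem re_map_eq_zero (f : ℍ[R] ≃ₐ[R] ℍ[R]) {x : ℍ[R]} (hx : x.re = 0) : (f x).re = 0 := by
  by_cases him : imVec (f x) = 0
  · have hx_coe : x = ↑(f x).re :=
      f.injective <| (eq_coe_re_of_imVec_eq_zero him).trans (map_coe f _).symm
    simpa [hx] using (congrArg QuaternionAlgebra.re hx_coe).symm
  · refine re_eq_zero_of_imVec_mul_self_eq_zero ?_ him
    have hsq : imVec (x * x) = 0 := by
      simp only [imVec_mul, hx, zero_smul, zero_add, cross_self]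
    rw [← map_mul, eq_coe_re_of_imVec_eq_zero hsq, map_coe, imVec_coe]

theorem mapIm_imMatrix (f : ℍ[R] ≃ₐ[R] ℍ[R]) : mapIm (imMatrix f) = f.toLinearMap := by
  ext1 x
  rw [AlgEquiv.toLinearMap_apply, map_eq_coe_re_add_map_ofVec_imVec]
  refine ext_re_imVec ?_ ?_
  · simp [re_map_eq_zero f (re_ofVec _)]
  · simp [imMatrix, LinearMap.toMatrix'_mulVec]

theorem imMatrix_mem_specialOrthogonalGroup (f : ℍ[R] ≃ₐ[R] ℍ[R]) :
    imMatrix f ∈ specialOrthogonalGroup (Fin 3) R := by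
  refine mem_specialOrthogonalGroup_fin_three_iff_dotProduct_cross.mpr <|
    mapIm_map_mul_iff.mp fun x y => ?_
  simp only [mapIm_imMatrix, AlgEquiv.toLinearMap_apply, map_mul]

theorem mapImAut_surjective : Function.Surjective (mapImAut (R := R)) := fun f =>
  ⟨⟨imMatrix f, imMatrix_mem_specialOrthogonalGroup f⟩, AlgEquiv.ext fun x => by
    rw [mapImAut_apply, mapIm_imMatrix, AlgEquiv.toLinearMap_apply]⟩

variable (R) in
def autEquivSpecialOrthogonalGroup :
    (ℍ[R] ≃ₐ[R] ℍ[R]) ≃* specialOrthogonalGroup (Fin 3) R :=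
  (MulEquiv.ofBijective mapImAut ⟨mapImAut_injective, mapImAut_surjective⟩).symm

end NoZeroDivisors

end Quaternion

theorem specialOrthogonalGroup_eq_SO3C : specialOrthogonalGroup (Fin 3) ℂ = SO3C :=
  Submonoid.ext fun _ =>
    mem_specialOrthogonalGroup_iff.trans (and_congr_left' (mem_orthogonalGroup_iff' _ _))

/-- The automorphism group of the complexified quaternions is `SO₃(ℂ)`: there is a group
isomorphism `(Quaternion ℂ ≃ₐ[ℂ] Quaternion ℂ) ≃* SO₃(ℂ)`. -/
theorem aut_complexified_quaternions_iso_SO3 :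
    Nonempty ((Quaternion ℂ ≃ₐ[ℂ] Quaternion ℂ) ≃* SO3C) :=
  ⟨(autEquivSpecialOrthogonalGroup ℂ).trans
    (MulEquiv.submonoidCongr specialOrthogonalGroup_eq_SO3C)⟩
end
end

section
/- Transitivity of the automorphism group of the octonions on the unit sphere of imaginary octonions: let 𝕆 be the real octonions. If x, y ∈ 𝕆 satisfy Re x = Re y = 0 and q x = q y = 1 (imaginary, norm one), then there exists an ℝ-linear bijection φ : 𝕆 ≃ₗ[ℝ] 𝕆 with φ(a*b) = φ(a)*φ(b) for all a, b ∈ 𝕆 (an algebra automorphism of 𝕆) such that φ(x) = y. -/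
noncomputable section

/-- The octonionic norm `q (a, b) = normSq a + normSq b`. -/
def octNorm (x : Quaternion ℝ × Quaternion ℝ) : ℝ :=
  Quaternion.normSq x.1 + Quaternion.normSq x.2

/-!
Write `x = (a, b)`. For a unit quaternion `v`, `(a, b) ↦ (a, v b)` is an automorphism, and so is
`(a, b) ↦ (σ a, σ b)` for every star-automorphism `σ` of `ℍ`, in particular for conjugation by a
unit quaternion. Since the imaginary quaternions of a given norm form one conjugacy class, these
move `x` to `(‖a‖ i, ‖b‖)`. A rotation mixing `ℍ` with `ℍ ℓ`, where `ℓ = (0, 1)`, then takes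
this point to `(i, 0)`, as `‖a‖² + ‖b‖² = 1`. Hence every imaginary unit octonion lies in the
orbit of `(i, 0)`.
-/

open Quaternion

namespace Quaternion

/-- An anonymous constructor `⟨r, x, y, z⟩ : ℍ` has type `QuaternionAlgebra ℝ (-1) 0 (-1)`,
on which the lemmas about `ℍ` do not fire. -/
def mk (r x y z : ℝ) : ℍ := ⟨r, x, y, z⟩

@[simp] lemma re_mk (r x y z : ℝ) : (mk r x y z).re = r := rfl
@[simp] lemma imI_mk (r x y z : ℝ) : (mk r x y z).imI = x := rfl
@[simp] lemma imJ_mk (r x y z : ℝ) : (mk r x y z).imJ = y := rfl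
@[simp] lemma imK_mk (r x y z : ℝ) : (mk r x y z).imK = z := rfl

lemma mem_unitary_of_normSq_eq_one {R : Type*} [CommRing R] {u : ℍ[R]} (hu : normSq u = 1) :
    u ∈ unitary ℍ[R] := by
  rw [Unitary.mem_iff, star_mul_self, self_mul_star, hu, coe_one]
  exact ⟨rfl, rfl⟩

lemma mul_self_eq_neg_normSq {R : Type*} [CommRing R] {a : ℍ[R]} (ha : a.re = 0) :
    a * a = -((normSq a : R) : ℍ[R]) := by
  have hstar : star a = -a := by ext <;> simp [ha]
  rw [← self_mul_star, hstar, mul_neg, neg_neg]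

lemma exists_unitary_mul_eq_norm (b : ℍ) : ∃ v : unitary ℍ, (v : ℍ) * b = (‖b‖ : ℍ) := by
  rcases eq_or_ne b 0 with rfl | hb
  · exact ⟨1, by simp⟩
  have hnorm : ‖b‖ ≠ 0 := norm_ne_zero_iff.mpr hb
  refine ⟨⟨‖b‖⁻¹ • star b, mem_unitary_of_normSq_eq_one ?_⟩, ?_⟩
  · rw [normSq_smul, normSq_star, normSq_eq_norm_mul_self]
    field_simp
  · rw [smul_mul_assoc, star_mul_self, normSq_eq_norm_mul_self, ← coe_mul_eq_smul, ← coe_mul]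
    congr 1
    field_simp

lemma exists_unitary_conj_eq_of_mul_eq {w a b : ℍ} (hw : w ≠ 0) (h : w * a = b * w) :
    ∃ u : unitary ℍ, (u : ℍ) * a * star (u : ℍ) = b := by
  have hnorm : ‖w‖ ≠ 0 := norm_ne_zero_iff.mpr hw
  refine ⟨⟨‖w‖⁻¹ • w, mem_unitary_of_normSq_eq_one ?_⟩, ?_⟩
  · rw [normSq_smul, normSq_eq_norm_mul_self]
    field_simp
  · calc (‖w‖⁻¹ • w) * a * star (‖w‖⁻¹ • w)
          = (‖w‖⁻¹ * ‖w‖⁻¹) • (w * a * star w) := by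
            rw [Quaternion.star_smul, smul_mul_assoc, smul_mul_assoc, mul_smul_comm, smul_smul]
        _ = (‖w‖⁻¹ * ‖w‖⁻¹ * normSq w) • b := by
            rw [h, mul_assoc, self_mul_star, mul_coe_eq_smul, smul_smul]
        _ = b := by
            rw [normSq_eq_norm_mul_self]
            field_simp
            exact one_smul ℝ b

lemma exists_unitary_conj_eq_of_ne_neg {a b : ℍ} (ha : a.re = 0) (hb : b.re = 0)
    (hab : normSq a = normSq b) (hne : a ≠ -b) :
    ∃ u : unitary ℍ, (u : ℍ) * a * star (u : ℍ) = b := by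
  set n := normSq a
  have haa : a * a = -(n : ℍ) := mul_self_eq_neg_normSq ha
  have hbb : b * b = -(n : ℍ) := by rw [mul_self_eq_neg_normSq hb, hab]
  -- `(n - b a) a = n a + b n = b (n - b a)`, as `a² = b² = -n` and `n` is central
  refine exists_unitary_conj_eq_of_mul_eq (w := (n : ℍ) - b * a) ?_ ?_
  · intro hw
    have hba : (n : ℍ) = b * a := sub_eq_zero.mp hw
    have hn_add : (n : ℍ) * (a + b) = 0 :=
      calc (n : ℍ) * (a + b) = n * a + b * (b * a) := by rw [mul_add, coe_commutes n b, ← hba]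
        _ = 0 := by rw [← mul_assoc, hbb, neg_mul, add_neg_cancel]
    rcases mul_eq_zero.mp hn_add with hn0 | hab_add
    · have hn0 : n = 0 := coe_injective (hn0.trans coe_zero.symm)
      have ha0 : a = 0 := normSq_eq_zero.mp hn0
      have hb0 : b = 0 := normSq_eq_zero.mp (hab ▸ hn0)
      exact hne (by rw [ha0, hb0, neg_zero])
    · exact hne (eq_neg_of_add_eq_zero_left hab_add)
  · rw [sub_mul, mul_sub, mul_assoc, haa, ← mul_assoc, hbb, coe_commutes]
    simp only [mul_neg, neg_mul, sub_neg_eq_add, coe_commutes]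
    abel

lemma exists_unitary_conj_eq_mk_norm {a : ℍ} (ha : a.re = 0) :
    ∃ u : unitary ℍ, (u : ℍ) * a * star (u : ℍ) = mk 0 ‖a‖ 0 0 := by
  have hnorm : normSq a = normSq (mk 0 ‖a‖ 0 0) := by
    rw [normSq_eq_norm_mul_self, normSq_def']
    simp only [re_mk, imI_mk, imJ_mk, imK_mk]
    ring
  by_cases h : a = -mk 0 ‖a‖ 0 0
  · -- `j` anticommutes with `i`
    refine exists_unitary_conj_eq_of_mul_eq (w := mk 0 0 1 0) ?_ ?_
    · intro h0
      simpa using congrArg QuaternionAlgebra.imJ h0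
    · nth_rewrite 1 [h]
      ext <;> simp
  · exact exists_unitary_conj_eq_of_ne_neg ha (re_mk ..) hnorm h

end Quaternion

local notation "𝕆" => Quaternion ℝ × Quaternion ℝ

namespace Octonion

def aut : Subgroup (𝕆 ≃ₗ[ℝ] 𝕆) where
  carrier := {φ | ∀ a b, φ (octMul a b) = octMul (φ a) (φ b)}
  mul_mem' {φ ψ} (hφ : ∀ a b, _) (hψ : ∀ a b, _) a b := by
    simp only [LinearEquiv.mul_apply, hφ, hψ]
  one_mem' _ _ := rfl
  inv_mem' {φ} (hφ : ∀ a b, _) a b := φ.injective <| by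
    simp only [LinearEquiv.coe_inv, LinearEquiv.apply_symm_apply, hφ]

def ofStarAlgEquiv (σ : ℍ ≃⋆ₐ[ℝ] ℍ) : 𝕆 ≃ₗ[ℝ] 𝕆 :=
  σ.toAlgEquiv.toLinearEquiv.prodCongr σ.toAlgEquiv.toLinearEquiv

lemma ofStarAlgEquiv_apply (σ : ℍ ≃⋆ₐ[ℝ] ℍ) (x : 𝕆) : ofStarAlgEquiv σ x = (σ x.1, σ x.2) :=
  rfl

lemma ofStarAlgEquiv_mem_aut (σ : ℍ ≃⋆ₐ[ℝ] ℍ) : ofStarAlgEquiv σ ∈ aut := fun a b => by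
  simp only [ofStarAlgEquiv_apply, octMul, map_sub, map_add, map_mul, map_star]

def mulLeftSnd (v : unitary ℍ) : 𝕆 ≃ₗ[ℝ] 𝕆 :=
  (LinearEquiv.refl ℝ ℍ).prodCongr ((Unitary.toUnits v).mulLeftLinearEquiv ℝ ℍ)

lemma mulLeftSnd_apply (v : unitary ℍ) (x : 𝕆) : mulLeftSnd v x = (x.1, v * x.2) := rfl

lemma mulLeftSnd_mem_aut (v : unitary ℍ) : mulLeftSnd v ∈ aut := fun a b => by
  have hv : ∀ q : ℍ, star (v : ℍ) * (v * q) = q := fun q => by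
    rw [← mul_assoc, Unitary.coe_star_mul_self, one_mul]
  simp only [mulLeftSnd_apply, octMul, star_mul, mul_assoc, hv, mul_add]

/-- Rotates the plane spanned by `(i, 0)` and `(0, 1)` and, in the opposite sense, the plane
spanned by `(k, 0)` and `(0, j)`, fixing the other four basis vectors. -/
def rotation (c s : ℝ) : 𝕆 →ₗ[ℝ] 𝕆 where
  toFun x := (mk x.1.re (c * x.1.imI + s * x.2.re) x.1.imJ (c * x.1.imK - s * x.2.imJ),
    mk (c * x.2.re - s * x.1.imI) x.2.imI (c * x.2.imJ + s * x.1.imK) x.2.imK)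
  map_add' x y := by
    ext <;> simp only [Prod.fst_add, Prod.snd_add, Prod.mk_add_mk, re_add, imI_add, imJ_add,
      imK_add, re_mk, imI_mk, imJ_mk, imK_mk] <;> ring
  map_smul' r x := by
    ext <;> simp only [Prod.smul_fst, Prod.smul_snd, Prod.smul_mk, Real.ringHom_apply, smul_eq_mul,
      re_smul, imI_smul, imJ_smul, imK_smul, re_mk, imI_mk, imJ_mk, imK_mk] <;> ring

lemma rotation_apply (c s : ℝ) (x : 𝕆) : rotation c s x =
    (mk x.1.re (c * x.1.imI + s * x.2.re) x.1.imJ (c * x.1.imK - s * x.2.imJ),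
      mk (c * x.2.re - s * x.1.imI) x.2.imI (c * x.2.imJ + s * x.1.imK) x.2.imK) := rfl

lemma rotation_neg_rotation {c s : ℝ} (h : c ^ 2 + s ^ 2 = 1) (x : 𝕆) :
    rotation c (-s) (rotation c s x) = x := by
  ext <;> simp only [rotation_apply, re_mk, imI_mk, imJ_mk, imK_mk] <;> grind

def rotationEquiv {c s : ℝ} (h : c ^ 2 + s ^ 2 = 1) : 𝕆 ≃ₗ[ℝ] 𝕆 :=
  .ofLinearMap (rotation c s) (rotation c (-s))
    (LinearMap.ext fun x => by simpa using rotation_neg_rotation (s := -s) (by rwa [neg_sq]) x)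
    (LinearMap.ext <| rotation_neg_rotation h)

lemma rotationEquiv_apply {c s : ℝ} (h : c ^ 2 + s ^ 2 = 1) (x : 𝕆) :
    rotationEquiv h x = rotation c s x := rfl

lemma rotationEquiv_mem_aut {c s : ℝ} (h : c ^ 2 + s ^ 2 = 1) : rotationEquiv h ∈ aut :=
  fun x y => by
    ext <;> simp only [octMul, rotationEquiv_apply, rotation_apply, re_add, re_sub, re_mul, re_star,
      imI_add, imI_sub, imI_mul, imI_star, imJ_add, imJ_sub, imJ_mul, imJ_star, imK_add, imK_sub,
      imK_mul, imK_star, re_mk, imI_mk, imJ_mk, imK_mk] <;> grind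

lemma exists_mem_aut_apply_eq_mk {x : 𝕆} (hre : x.1.re = 0) (hx : octNorm x = 1) :
    ∃ φ ∈ aut, φ x = (mk 0 1 0 0, 0) := by
  obtain ⟨v, hv⟩ := exists_unitary_mul_eq_norm x.2
  obtain ⟨u, hu⟩ := exists_unitary_conj_eq_mk_norm hre
  have hsum : ‖x.1‖ ^ 2 + ‖x.2‖ ^ 2 = 1 := by
    simpa only [octNorm, normSq_eq_norm_mul_self, sq] using hx
  set σ := Unitary.conjStarAlgAut ℝ ℍ u
  have hσ : ofStarAlgEquiv σ (mulLeftSnd v x) = (mk 0 ‖x.1‖ 0 0, (‖x.2‖ : ℍ)) := by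
    rw [mulLeftSnd_apply, hv, ofStarAlgEquiv_apply, Unitary.conjStarAlgAut_apply, hu,
      Unitary.conjStarAlgAut_apply, ← coe_commutes, mul_assoc, Unitary.mul_star_self_of_mem u.2,
      mul_one]
  refine ⟨rotationEquiv hsum * ofStarAlgEquiv σ * mulLeftSnd v,
    mul_mem (mul_mem (rotationEquiv_mem_aut hsum) (ofStarAlgEquiv_mem_aut σ))
      (mulLeftSnd_mem_aut v), ?_⟩
  rw [LinearEquiv.mul_apply, LinearEquiv.mul_apply, hσ, rotationEquiv_apply, rotation_apply]
  ext <;> simp only [re_coe, imI_coe, imJ_coe, imK_coe, re_zero, imI_zero, imJ_zero, imK_zero,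
    re_mk, imI_mk, imJ_mk, imK_mk] <;> linarith

end Octonion

/-- The automorphism group of the octonions acts transitively on the unit sphere of
imaginary octonions: any two imaginary octonions of norm one are related by an
algebra automorphism of `𝕆`. -/
theorem octonion_aut_transitive_unit_sphere
    (x y : Quaternion ℝ × Quaternion ℝ)
    (hxIm : x.1.re = 0) (hyIm : y.1.re = 0)
    (hxQ : octNorm x = 1) (hyQ : octNorm y = 1) :
    ∃ φ : (Quaternion ℝ × Quaternion ℝ) ≃ₗ[ℝ] (Quaternion ℝ × Quaternion ℝ),
      (∀ a b, φ (octMul a b) = octMul (φ a) (φ b)) ∧ φ x = y := by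
  obtain ⟨φ, hφ, hφx⟩ := Octonion.exists_mem_aut_apply_eq_mk hxIm hxQ
  obtain ⟨ψ, hψ, hψy⟩ := Octonion.exists_mem_aut_apply_eq_mk hyIm hyQ
  refine ⟨ψ⁻¹ * φ, Octonion.aut.mul_mem (Octonion.aut.inv_mem hψ) hφ, ?_⟩
  rw [LinearEquiv.mul_apply, hφx, ← hψy, LinearEquiv.coe_inv, LinearEquiv.symm_apply_apply]
end
end
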